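/- Let MΣ = (P, Σ, V, MV) be a CQ weakly acyclic materialized-view setting. Then MΣ is valid — i.e., there exists a ground instance I of P with I ⊨ Σ and V(I) = MV[V] for each view V ∈ V — if and only if the set J^{MΣ}_{vv} of view-verified universal solutions for MΣ is nonempty. -/

import Mathlib

namespace CertainViews

/-! ### Values, terms, schemas, instances -/

/-- Values: constants and labeled nulls. -/
inductive Val : Type
  | const : ℕ → Val
  | null : ℕ → Val
deriving DecidableEq

/-- A value is a constant. -/
def Val.IsConst (a : Val) : Prop := ∃ c, a = Val.const c

/-- Terms of queries and dependencies: query variables and constants. -/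
inductive Term : Type
  | var : ℕ → Term
  | const : ℕ → Term
deriving DecidableEq

/-- Evaluation of a term under an assignment of values to variables
(constants are fixed, as in homomorphisms/valuations). -/
def Term.eval (ν : ℕ → Val) : Term → Val
  | .var x => ν x
  | .const c => .const c

/-- A relational schema: a collection of relation symbols, each with a fixed arity. -/
structure Schema : Type 1 where
  rel : Type
  arity : rel → ℕ

variable {S : Schema}

/-- An instance of a schema assigns a relation (a set of tuples of values)
to each relation symbol. -/
structure Inst (S : Schema) : Type where
  rels : ∀ r : S.rel, Set (Fin (S.arity r) → Val)

/-- The facts of an instance, as a set of (relation symbol, tuple) pairs. -/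
def Inst.facts (I : Inst S) : Set ((r : S.rel) × (Fin (S.arity r) → Val)) :=
  { p | p.2 ∈ I.rels p.1 }

/-- The instance determined by a set of facts. -/
def Inst.ofFacts (F : Set ((r : S.rel) × (Fin (S.arity r) → Val))) : Inst S :=
  ⟨fun r => { t | (⟨r, t⟩ : (r : S.rel) × (Fin (S.arity r) → Val)) ∈ F }⟩

/-- A ground instance contains only constants. -/
def Inst.Ground (I : Inst S) : Prop :=
  ∀ r, ∀ t ∈ I.rels r, ∀ i, (t i).IsConst

/-- The active domain of an instance. -/
def Inst.adom (I : Inst S) : Set Val :=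
  { a | ∃ p ∈ I.facts, ∃ i, p.2 i = a }

/-- Applying a mapping on values to all facts of an instance. -/
def Inst.map (ρ : Val → Val) (I : Inst S) : Inst S :=
  Inst.ofFacts ((fun p : (r : S.rel) × (Fin (S.arity r) → Val) =>
    (⟨p.1, fun i => ρ (p.2 i)⟩ : (r : S.rel) × (Fin (S.arity r) → Val))) '' I.facts)

/-- A homomorphism between instances: a mapping of values fixing constants
that sends facts to facts. -/
def InstHom (J I : Inst S) : Prop :=
  ∃ ρ : Val → Val, (∀ c, ρ (Val.const c) = Val.const c) ∧
    ∀ p ∈ J.facts, (⟨p.1, fun i => ρ (p.2 i)⟩ : (r : S.rel) × (Fin (S.arity r) → Val)) ∈ I.facts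

/-! ### Atoms, conjunctive queries -/

/-- A relational atom over a schema. -/
structure Atom (S : Schema) : Type where
  rel : S.rel
  args : Fin (S.arity rel) → Term

/-- Applying a term mapping to an atom. -/
def Atom.mapTerms (f : Term → Term) (A : Atom S) : Atom S :=
  ⟨A.rel, fun i => f (A.args i)⟩

/-- The variables occurring in a list of atoms. -/
def BodyVars (B : List (Atom S)) : Set ℕ :=
  { x | ∃ A ∈ B, ∃ j, A.args j = Term.var x }

/-- A conjunction of atoms holds in an instance under a valuation. -/
def BodyHolds (ν : ℕ → Val) (B : List (Atom S)) (I : Inst S) : Prop :=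
  ∀ A ∈ B, (fun i => (A.args i).eval ν) ∈ I.rels A.rel

/-- The set of facts obtained by applying a valuation to a list of atoms. -/
def factSet (B : List (Atom S)) (ν : ℕ → Val) : Set ((r : S.rel) × (Fin (S.arity r) → Val)) :=
  { p | ∃ A ∈ B, p = ⟨A.rel, fun i => (A.args i).eval ν⟩ }

/-- A conjunctive query (`CQ` query) of arity `k`: a head vector of terms
and a body that is a finite conjunction of relational atoms. -/
structure CQ (S : Schema) (k : ℕ) : Type where
  head : Fin k → Term
  body : List (Atom S)

/-- Safety of a CQ query: the body is nonempty and every head variable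
occurs in the body. -/
def CQ.Safe {k : ℕ} (Q : CQ S k) : Prop :=
  Q.body ≠ [] ∧ ∀ x, (∃ i, Q.head i = Term.var x) → ∃ A ∈ Q.body, ∃ j, A.args j = Term.var x

/-- The answer to a CQ query on an instance: images of the head vector
under all valuations from the body to the instance. -/
def CQ.answer {k : ℕ} (Q : CQ S k) (I : Inst S) : Set (Fin k → Val) :=
  { t | ∃ ν : ℕ → Val, BodyHolds ν Q.body I ∧ t = fun i => (Q.head i).eval ν }

/-- The constants occurring in a CQ query. -/
def CQ.consts {k : ℕ} (Q : CQ S k) : Set ℕ :=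
  { c | (∃ i, Q.head i = Term.const c) ∨ ∃ A ∈ Q.body, ∃ j, A.args j = Term.const c }

/-- A query of arity `k` in an arbitrary query language, identified with its semantics. -/
def GenQuery (S : Schema) (k : ℕ) : Type := Inst S → Set (Fin k → Val)

/-- The tuple of constants corresponding to a tuple of natural numbers. -/
def constTuple {k : ℕ} (t : Fin k → ℕ) : Fin k → Val := fun i => Val.const (t i)


/-! ### Embedded dependencies: tgds and egds -/

/-- A tuple-generating dependency (tgd)
`∀ x̄ ȳ (φ(x̄,ȳ) → ∃ z̄ ψ(x̄,z̄))`: the body is `φ`; the head is `ψ`; the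
existential variables are the head variables not occurring in the body. -/
structure TGD (S : Schema) : Type where
  body : List (Atom S)
  head : List (Atom S)

/-- Satisfaction of a tgd in an instance. -/
def TGD.holds (σ : TGD S) (I : Inst S) : Prop :=
  ∀ ν : ℕ → Val, BodyHolds ν σ.body I →
    ∃ ν' : ℕ → Val, (∀ x ∈ BodyVars σ.body, ν' x = ν x) ∧ BodyHolds ν' σ.head I

/-- An equality-generating dependency (egd) `∀ x̄ (φ(x̄) → x₁ = x₂)`. -/
structure EGD (S : Schema) : Type where
  body : List (Atom S)
  lhs : ℕ
  rhs : ℕ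

/-- Satisfaction of an egd in an instance. -/
def EGD.holds (σ : EGD S) (I : Inst S) : Prop :=
  ∀ ν : ℕ → Val, BodyHolds ν σ.body I → ν σ.lhs = ν σ.rhs

/-- An embedded dependency: a tgd or an egd. -/
inductive Dep (S : Schema) : Type
  | tgd : TGD S → Dep S
  | egd : EGD S → Dep S

def Dep.holds : Dep S → Inst S → Prop
  | .tgd σ, I => σ.holds I
  | .egd σ, I => σ.holds I

/-- An instance satisfies a set of dependencies. -/
def Inst.satisfiesAll (I : Inst S) (D : Set (Dep S)) : Prop := ∀ d ∈ D, d.holds I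

/-- An atom contains no constants. -/
def Atom.ConstantFree (A : Atom S) : Prop := ∀ i, ∃ x, A.args i = Term.var x

/-- A dependency without constants. -/
def Dep.ConstantFree : Dep S → Prop
  | .tgd σ => (∀ A ∈ σ.body, A.ConstantFree) ∧ (∀ A ∈ σ.head, A.ConstantFree)
  | .egd σ => ∀ A ∈ σ.body, A.ConstantFree

/-! ### Weak acyclicity -/

/-- A position of a schema: a relation symbol together with an attribute index. -/
def Pos (S : Schema) : Type := S.rel × ℕ

/-- Variable `x` occurs in the list of atoms `B` at position `p`. -/
def OccursAt (B : List (Atom S)) (x : ℕ) (p : Pos S) : Prop :=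
  ∃ A ∈ B, A.rel = p.1 ∧ ∃ i : Fin (S.arity A.rel), (i : ℕ) = p.2 ∧ A.args i = Term.var x

/-- Regular edge of the dependency graph, induced by a tgd. -/
def TGD.RegularEdge (σ : TGD S) (p q : Pos S) : Prop :=
  ∃ x, OccursAt σ.body x p ∧ x ∈ BodyVars σ.head ∧ OccursAt σ.head x q

/-- Special edge of the dependency graph, induced by a tgd. -/
def TGD.SpecialEdge (σ : TGD S) (p q : Pos S) : Prop :=
  ∃ x y, OccursAt σ.body x p ∧ x ∈ BodyVars σ.head ∧
    y ∈ BodyVars σ.head ∧ y ∉ BodyVars σ.body ∧ OccursAt σ.head y q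

/-- An edge (regular or special) of the dependency graph of a set of dependencies. -/
def DepEdge (D : Set (Dep S)) (p q : Pos S) : Prop :=
  ∃ σ : TGD S, Dep.tgd σ ∈ D ∧ (σ.RegularEdge p q ∨ σ.SpecialEdge p q)

/-- A set of tgds and egds is weakly acyclic iff the dependency graph of its
tgds has no cycle going through a special edge. -/
def WeaklyAcyclic (D : Set (Dep S)) : Prop :=
  ¬ ∃ (σ : TGD S) (p q : Pos S), Dep.tgd σ ∈ D ∧ σ.SpecialEdge p q ∧
      Relation.ReflTransGen (DepEdge D) q p



/-! ### Views and materialized-view settings -/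

/-- A finite set of views over a schema `S`: view names with arities,
each defined by a (safe) CQ query over `S`. -/
structure Views (S : Schema) : Type 1 where
  idx : Type
  finite : Finite idx
  arity : idx → ℕ
  defn : ∀ v : idx, CQ S (arity v)
  safe : ∀ v, (defn v).Safe

/-- The view schema determined by a set of views. -/
def Views.schema {S : Schema} (V : Views S) : Schema := ⟨V.idx, V.arity⟩

/-- The image of an instance under a set of views: the instance of the view
schema assigning to each view the answer of its defining query. -/
def Views.image {S : Schema} (V : Views S) (I : Inst S) : Inst V.schema :=
  ⟨fun v => (V.defn v).answer I⟩

/-- The fixed part of a materialized-view setting: a schema `P`, a finite set `Σ`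
of embedded dependencies without constants on `P`, and a set `V` of CQ views on `P`. -/
structure Frame : Type 1 where
  S : Schema
  deps : Set (Dep S)
  depsFinite : deps.Finite
  depsConstantFree : ∀ d ∈ deps, d.ConstantFree
  views : Views S

/-- A (CQ) materialized-view setting `MΣ = (P, Σ, V, MV)`:
a frame together with a finite ground instance `MV` of the view schema. -/
structure MVSetting : Type 1 extends Frame where
  mv : Inst views.schema
  mvGround : mv.Ground
  mvFinite : mv.facts.Finite

/-- `V ⇒_{I,Σ} MV`: the ground instance `I` is a `Σ`-valid base instance
for `V` and `MV` (closed-world assumption). -/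
def MVSetting.ValidBase (M : MVSetting) (I : Inst M.S) : Prop :=
  I.Ground ∧ I.satisfiesAll M.deps ∧ ∀ v, (M.views.defn v).answer I = M.mv.rels v

/-- A materialized-view setting is valid iff some `Σ`-valid base instance exists. -/
def MVSetting.Valid (M : MVSetting) : Prop := ∃ I, M.ValidBase I

/-- The set of certain answers of a query w.r.t. a materialized-view setting. -/
def MVSetting.certain (M : MVSetting) {k : ℕ} (Q : GenQuery M.S k) : Set (Fin k → Val) :=
  { t | ∀ I, M.ValidBase I → t ∈ Q I }

/-- `consts(MΣ)`: the constants occurring in `MV` or in the view definitions. -/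
def MVSetting.consts (M : MVSetting) : Set ℕ :=
  { c | (∃ p ∈ M.mv.facts, ∃ i, p.2 i = Val.const c) ∨ ∃ v, c ∈ (M.views.defn v).consts }

/-- `MΣ`-conditional containment of queries: `Q₁(I) ⊆ Q₂(I)` for every
`Σ`-valid base instance `I` for `V` and `MV`. -/
def MVSetting.CondContained (M : MVSetting) {k : ℕ} (Q1 Q2 : GenQuery M.S k) : Prop :=
  ∀ I, M.ValidBase I → Q1 I ⊆ Q2 I

/-- The expansion query `Q₁(t̄) ← C^exp_MV`, where `C^exp_MV` is the expansion of
`MV` over the base schema: each fact of `MV` is replaced by the body of the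
corresponding view definition, with head variables bound to the constants of the
fact and with nonhead variables renamed apart across the facts.  Since the
variables are renamed apart, its answer on an instance `I` is `{t̄}` exactly
when every fact of `MV` is an answer to the corresponding view on `I`
(and is empty otherwise). -/
def MVSetting.expansionQuery (M : MVSetting) {k : ℕ} (t : Fin k → ℕ) : GenQuery M.S k :=
  fun I => { u | u = constTuple t ∧ ∀ v, M.mv.rels v ⊆ (M.views.defn v).answer I }


/-! ### Rewritings in terms of the views -/

/-- Substitution of terms for variables in a term. -/
def Term.subst (h : ℕ → Term) : Term → Term
  | .var x => h x
  | .const c => .const c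

/-- The term corresponding to a value (constants to constants, nulls to variables). -/
def Val.toTerm : Val → Term
  | .const c => .const c
  | .null n => .var n

/-- `R^exp` exists and is the query `E` over the base schema:
an expansion of a rewriting `R` over the view schema is a query `E` whose
answer on every base instance is the answer of `R` on the view image. -/
def IsExpansion {S : Schema} (V : Views S) {k : ℕ} (R : GenQuery V.schema k)
    (E : GenQuery S k) : Prop :=
  ∀ I, E I = R (V.image I)

/-- The expansion `R^exp` over the base schema of a CQ rewriting `R` over the views
of a setting, given by its semantics `R^exp(I) = R(I^{(+V)})`. -/
def MVSetting.expQuery (M : MVSetting) {k : ℕ} (R : CQ M.views.schema k) : GenQuery M.S k :=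
  fun I => R.answer (M.views.image I)

/-- `R ⊑_{Σ,MV,V} Q`: the rewriting `R` is `Σ`-conditionally contained in `Q`
w.r.t. `MV` and modulo `V`, i.e., `R^exp(I) ⊆ Q(I)` for every `Σ`-valid base
instance `I` for `V` and `MV`. -/
def MVSetting.RewContained (M : MVSetting) {k : ℕ} (R : CQ M.views.schema k)
    (Q : GenQuery M.S k) : Prop :=
  ∀ I, M.ValidBase I → M.expQuery R I ⊆ Q I

/-- A head-instantiated rewriting for a ground tuple `t̄`: a safe CQ query over the
view schema with head vector `t̄`, obtained from some safe CQ query with a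
constant-free head vector by instantiating its head variables to constants
(mapping all remaining terms to themselves). -/
def IsHeadInstantiated (M : MVSetting) {k : ℕ} (t : Fin k → ℕ)
    (R : CQ M.views.schema k) : Prop :=
  R.Safe ∧ (∀ i, R.head i = Term.const (t i)) ∧
  ∃ Rg : CQ M.views.schema k, Rg.Safe ∧ (∀ i, ∃ x, Rg.head i = Term.var x) ∧
    ∃ h : ℕ → Term,
      (∀ x, (∃ i, Rg.head i = Term.var x) → ∃ c, h x = Term.const c) ∧
      (∀ x, (¬ ∃ i, Rg.head i = Term.var x) → h x = Term.var x) ∧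
      R.head = (fun i => (Rg.head i).subst h) ∧
      R.body = Rg.body.map (Atom.mapTerms (Term.subst h))

/-- A rewriting `R` is `MV`-validated iff its answer on `MV` is nonempty. -/
def MVValidated (M : MVSetting) {k : ℕ} (R : CQ M.views.schema k) : Prop :=
  (R.answer M.mv).Nonempty

/-- The atom over the view schema corresponding to a fact of `MV`. -/
def MVSetting.factAtom (M : MVSetting) (v : M.views.idx)
    (tv : Fin (M.views.arity v) → Val) : Atom M.views.schema :=
  ⟨v, fun i => (tv i).toTerm⟩

/-- An `MV`-induced rewriting for `t̄`: a CQ rewriting with head vector `t̄`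
each of whose subgoals is a fact of `MV`. -/
def IsMVInduced (M : MVSetting) {k : ℕ} (t : Fin k → ℕ) (R : CQ M.views.schema k) : Prop :=
  (∀ i, R.head i = Term.const (t i)) ∧
  ∀ A ∈ R.body, ∃ v, ∃ tv ∈ M.mv.rels v, A = M.factAtom v tv

/-- A maximal `MV`-induced rewriting for `t̄`: an `MV`-induced rewriting for `t̄`
having every fact of `MV` as a subgoal. -/
def IsMaxMVInduced (M : MVSetting) {k : ℕ} (t : Fin k → ℕ) (R : CQ M.views.schema k) : Prop :=
  IsMVInduced M t R ∧ ∀ v, ∀ tv ∈ M.mv.rels v, M.factAtom v tv ∈ R.body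


/-! ### Data exchange: canonical solutions and instance chase -/

/-- The solutions of the data-exchange setting `S^{(de)}(MΣ) = (V, P, Σ_st ∪ Σ)`
associated with a setting `MΣ`, for the source instance `MV`: a target instance `J`
such that `(MV, J)` satisfies the source-to-target tgds
`V(x̄) → ∃ȳ body_V(x̄,ȳ)` (for each view `V`) and the target dependencies `Σ`. -/
def MVSetting.DESolution (M : MVSetting) (J : Inst M.S) : Prop :=
  J.satisfiesAll M.deps ∧ ∀ v, M.mv.rels v ⊆ (M.views.defn v).answer J

/-- A (standard) instance-chase step with a tgd: an applicable trigger whose head is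
added with fresh distinct nulls for the existential variables. -/
def tgdStep {S : Schema} (σ : TGD S) (J J' : Inst S) : Prop :=
  ∃ h : ℕ → Val, BodyHolds h σ.body J ∧
    ¬ (∃ g : ℕ → Val, (∀ x ∈ BodyVars σ.body, g x = h x) ∧ BodyHolds g σ.head J) ∧
    ∃ h' : ℕ → Val, (∀ x ∈ BodyVars σ.body, h' x = h x) ∧
      (∀ x ∈ BodyVars σ.head, x ∉ BodyVars σ.body →
        (∃ n, h' x = Val.null n) ∧ h' x ∉ J.adom) ∧
      Set.InjOn h' { x | x ∈ BodyVars σ.head ∧ x ∉ BodyVars σ.body } ∧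
      J' = Inst.ofFacts (J.facts ∪ factSet σ.head h')

/-- A successful instance-chase step with an egd: a violating trigger in which at
least one of the two values is a null, which is then replaced by the other value. -/
def egdStepOk {S : Schema} (σ : EGD S) (J J' : Inst S) : Prop :=
  ∃ h : ℕ → Val, BodyHolds h σ.body J ∧ h σ.lhs ≠ h σ.rhs ∧
    (((∃ n, h σ.lhs = Val.null n) ∧
        J' = J.map (fun a => if a = h σ.lhs then h σ.rhs else a)) ∨
     ((∃ n, h σ.rhs = Val.null n) ∧
        J' = J.map (fun a => if a = h σ.rhs then h σ.lhs else a)))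

/-- A failing instance-chase step with an egd: a violating trigger equating two
distinct constants. -/
def egdStepFail {S : Schema} (σ : EGD S) (J : Inst S) : Prop :=
  ∃ h : ℕ → Val, BodyHolds h σ.body J ∧ h σ.lhs ≠ h σ.rhs ∧
    (h σ.lhs).IsConst ∧ (h σ.rhs).IsConst

/-- A successful chase step with some dependency of a set. -/
def depStepTo {S : Schema} (D : Set (Dep S)) (J J' : Inst S) : Prop :=
  (∃ σ : TGD S, Dep.tgd σ ∈ D ∧ tgdStep σ J J') ∨
  (∃ σ : EGD S, Dep.egd σ ∈ D ∧ egdStepOk σ J J')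

/-- `J` is a (terminal) result of chasing `J0` with the dependencies `D`. -/
def ChaseResult {S : Schema} (D : Set (Dep S)) (J0 J : Inst S) : Prop :=
  Relation.ReflTransGen (depStepTo D) J0 J ∧ J.satisfiesAll D

/-- The result of chasing the source instance `MV` with the source-to-target tgds
`Σ_st` of the associated data-exchange setting: for each fact `t ∈ MV[V]`, the body
of the view definition of `V` is added, with the head variables bound to `t` and
with fresh, globally distinct nulls for the nonhead variables. -/
def MVSetting.IsPreSolution (M : MVSetting) (J : Inst M.S) : Prop :=
  ∃ ν : (v : M.views.idx) → (Fin (M.views.arity v) → Val) → ℕ → Val,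
    (∀ v, ∀ t ∈ M.mv.rels v, ∀ i, ((M.views.defn v).head i).eval (ν v t) = t i) ∧
    (∀ v, ∀ t ∈ M.mv.rels v, ∀ x ∈ BodyVars (M.views.defn v).body,
      (¬ ∃ i, (M.views.defn v).head i = Term.var x) → ∃ n, ν v t x = Val.null n) ∧
    (∀ v v' t t' x x', t ∈ M.mv.rels v → t' ∈ M.mv.rels v' →
      x ∈ BodyVars (M.views.defn v).body →
      (¬ ∃ i, (M.views.defn v).head i = Term.var x) →
      x' ∈ BodyVars (M.views.defn v').body →
      (¬ ∃ i, (M.views.defn v').head i = Term.var x') →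
      ν v t x = ν v' t' x' → v = v' ∧ HEq t t' ∧ x = x') ∧
    J.facts = ⋃ v, ⋃ t ∈ M.mv.rels v, factSet (M.views.defn v).body (ν v t)

/-- `J_de^{MΣ}`: a canonical universal solution for the source instance `MV` in the
data-exchange setting associated with `MΣ`, i.e., a terminal result of chasing `MV`
with `Σ_st ∪ Σ`. -/
def MVSetting.IsCanonicalSolution (M : MVSetting) (J : Inst M.S) : Prop :=
  ∃ J0, M.IsPreSolution J0 ∧ ChaseResult M.deps J0 J

/-! ### MV-enhanced chase (view-verified data exchange) -/

/-- Applying, to an instance, the conjunction of equalities forcing the values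
`vals j` to become the values `tgt j` (a disjunct of an `MV`-induced disjunctive
egd): succeeds iff there is a substitution fixing the constants and all other
values that realizes the equalities. -/
def substResult {S : Schema} (J J' : Inst S) {k : ℕ} (vals tgt : Fin k → Val) : Prop :=
  ∃ ρ : Val → Val, (∀ c, ρ (Val.const c) = Val.const c) ∧
    (∀ a, (∀ j, a ≠ vals j) → ρ a = a) ∧ (∀ j, ρ (vals j) = tgt j) ∧ J' = J.map ρ

/-- The values of the head vector of a CQ under a valuation. -/
def headVals {S : Schema} {k : ℕ} (Q : CQ S k) (h : ℕ → Val) : Fin k → Val :=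
  fun i => (Q.head i).eval h

/-- The set of results of one chase step with the `MV`-induced generalized egd of a
view `v` on an instance `J` (with trigger `h`): one (successful) result for each
tuple of `MV[v]`, or the empty instance `ε` (here: `none`) if all disjuncts fail. -/
def MVSetting.gedResults (M : MVSetting) (v : M.views.idx) (J : Inst M.S)
    (h : ℕ → Val) : Set (Option (Inst M.S)) :=
  { o | (∃ t ∈ M.mv.rels v, ∃ J', o = some J' ∧
           substResult J J' (headVals (M.views.defn v) h) t)
      ∨ (o = none ∧ ∀ t ∈ M.mv.rels v,
           ¬ ∃ J', substResult J J' (headVals (M.views.defn v) h) t) }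

/-- The step system of the `MV`-enhanced chase with `Σ ∪ Σ^{(MΣ)}` on instances:
to each node (an instance, or the empty instance `ε` = `none`) it assigns the
possible chase steps, each step being the set of its results.  The steps are:
chase steps with the tgds and egds of `Σ`; steps with the `MV`-induced implication
constraint `body_V → false` of each view `V` with `MV[V] = ∅`; and steps with the
`MV`-induced disjunctive egd `body_V(x̄,ȳ) → ⋁_i (x̄ = t̄ᵢ)` of each view `V` of
positive arity with `MV[V] ≠ ∅`. -/
def MVSetting.mvChaseSteps (M : MVSetting) :
    Option (Inst M.S) → Set (Set (Option (Inst M.S)))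
  | none => ∅
  | some J =>
    { C | (∃ σ : TGD M.S, Dep.tgd σ ∈ M.deps ∧ ∃ J', tgdStep σ J J' ∧ C = {some J'})
        ∨ (∃ σ : EGD M.S, Dep.egd σ ∈ M.deps ∧ ∃ J', egdStepOk σ J J' ∧ C = {some J'})
        ∨ (∃ σ : EGD M.S, Dep.egd σ ∈ M.deps ∧ egdStepFail σ J ∧
             C = {(none : Option (Inst M.S))})
        ∨ (∃ v, M.mv.rels v = ∅ ∧ (∃ h, BodyHolds h (M.views.defn v).body J) ∧
             C = {(none : Option (Inst M.S))})
        ∨ (∃ v, (M.mv.rels v).Nonempty ∧ 1 ≤ M.views.arity v ∧ ∃ h : ℕ → Val,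
             BodyHolds h (M.views.defn v).body J ∧
             (∀ t ∈ M.mv.rels v, ∃ i, headVals (M.views.defn v) h i ≠ t i) ∧
             C = M.gedResults v J h) }

/-- One edge of the MV-enhanced chase: passing from a node to one of the results of
an applicable chase step. -/
def MVSetting.mvStep (M : MVSetting) (a b : Option (Inst M.S)) : Prop :=
  ∃ C ∈ M.mvChaseSteps a, b ∈ C

/-- Reachability along MV-enhanced chase steps. -/
def MVSetting.mvReach (M : MVSetting) : Option (Inst M.S) → Option (Inst M.S) → Prop :=
  Relation.ReflTransGen M.mvStep

/-- A view-verified universal solution for `MΣ`: a nonempty leaf of a (finite)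
MV-enhanced chase of a canonical universal solution `J_de^{MΣ}` with
`Σ ∪ Σ^{(MΣ)}`, i.e., a terminal nonempty instance reachable from `J_de^{MΣ}`. -/
def MVSetting.IsVVSolution (M : MVSetting) (J : Inst M.S) : Prop :=
  ∃ Jde, M.IsCanonicalSolution Jde ∧ M.mvReach (some Jde) (some J) ∧
    M.mvChaseSteps (some J) = ∅

/-- A grounded version of an instance `J`: the result of consistently replacing all
its nulls with distinct new constants (avoiding the constants in `avoid`). -/
def GroundedVersion {S : Schema} (avoid : Set ℕ) (J J' : Inst S) : Prop :=
  ∃ ρ : Val → Val, (∀ c, ρ (Val.const c) = Val.const c) ∧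
    (∀ n, ∃ c, ρ (Val.null n) = Val.const c ∧ c ∉ avoid ∧ Val.const c ∉ J.adom) ∧
    Set.InjOn ρ J.adom ∧ J' = J.map ρ

/-- Chains of a given length for a binary relation. -/
def chainOfLength {α : Type*} (R : α → α → Prop) : ℕ → α → α → Prop
  | 0, a, b => a = b
  | n + 1, a, b => ∃ c, R a c ∧ chainOfLength R n c b


/-! ### Finitely-branching rooted trees, for chase trees -/

/-- Finite rooted trees with labels in `β`. -/
inductive RTree (β : Type) : Type
  | node : β → List (RTree β) → RTree β

namespace RTree

variable {β : Type}

/-- The label of the root. -/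
def label : RTree β → β
  | .node b _ => b

mutual
  /-- The depth of a tree (a single node has depth 1). -/
  def depth : RTree β → ℕ
    | .node _ ts => depthL ts + 1
  def depthL : List (RTree β) → ℕ
    | [] => 0
    | t :: ts => max (depth t) (depthL ts)
end

mutual
  /-- The number of leaves of a tree. -/
  def leafCount : RTree β → ℕ
    | .node _ [] => 1
    | .node _ (t :: ts) => leafCount t + leafCountL ts
  def leafCountL : List (RTree β) → ℕ
    | [] => 0
    | t :: ts => leafCount t + leafCountL ts
end

mutual
  /-- The list of labels of the leaves of a tree. -/
  def leaves : RTree β → List β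
    | .node b [] => [b]
    | .node _ (t :: ts) => leaves t ++ leavesL ts
  def leavesL : List (RTree β) → List β
    | [] => []
    | t :: ts => leaves t ++ leavesL ts
end

/-- The labels of a list of trees, as a set. -/
def labelsOf (ts : List (RTree β)) : Set β := { b | ∃ t ∈ ts, label t = b }

mutual
  /-- A chase tree for a disjunctive-step system `D` (assigning to each node label
  the set of possible chase steps, each step given by the set of its results):
  each inner node's children are exactly the results of one applicable chase step,
  and leaves are exactly the nodes to which no chase step applies. -/
  def Valid (D : β → Set (Set β)) : RTree β → Prop
    | .node b ts => (D b = ∅ ∧ ts = []) ∨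
        (∃ C ∈ D b, labelsOf ts = C ∧ ValidL D ts)
  def ValidL (D : β → Set (Set β)) : List (RTree β) → Prop
    | [] => True
    | t :: ts => Valid D t ∧ ValidL D ts
end

end RTree





/-! ### CQ queries with disequalities and unions thereof -/

/-- A `CQ^≠` query: a CQ query whose body may also contain disequality atoms. -/
structure CQNeq (S : Schema) (k : ℕ) : Type where
  head : Fin k → Term
  body : List (Atom S)
  diseqs : List (Term × Term)

/-- The answer to a `CQ^≠` query on an instance (via valuations: homomorphisms
from the relational atoms that satisfy all the disequalities). -/
def CQNeq.answer {k : ℕ} (Q : CQNeq S k) (I : Inst S) : Set (Fin k → Val) :=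
  { t | ∃ ν : ℕ → Val, BodyHolds ν Q.body I ∧
      (∀ p ∈ Q.diseqs, p.1.eval ν ≠ p.2.eval ν) ∧ t = fun i => (Q.head i).eval ν }

/-- The answer to a `UCQ^≠` query (a finite set of `CQ^≠` components; the
trivial query `[]` has empty answer on every instance). -/
def ucqAnswer {k : ℕ} (R : List (CQNeq S k)) (I : Inst S) : Set (Fin k → Val) :=
  { t | ∃ q ∈ R, t ∈ q.answer I }

/-- The terms occurring in a `CQ^≠` query. -/
def CQNeq.terms {k : ℕ} (Q : CQNeq S k) : Set Term :=
  { u | (∃ i, Q.head i = u) ∨ (∃ A ∈ Q.body, ∃ j, A.args j = u) ∨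
        (∃ p ∈ Q.diseqs, p.1 = u ∨ p.2 = u) }

/-- Applying a term mapping to a `CQ^≠` query. -/
def CQNeq.mapTerms {k : ℕ} (θ : Term → Term) (Q : CQNeq S k) : CQNeq S k :=
  ⟨fun i => θ (Q.head i), Q.body.map (Atom.mapTerms θ), Q.diseqs.map fun p => (θ p.1, θ p.2)⟩

/-- The query has the disequality atom `a ≠ b` (in either orientation). -/
def CQNeq.hasDiseq {k : ℕ} (Q : CQNeq S k) (a b : Term) : Prop :=
  (a, b) ∈ Q.diseqs ∨ (b, a) ∈ Q.diseqs

/-- A homomorphism (on the query level) from a conjunction of atoms into the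
body of a `CQ^≠` query. -/
def homTo {k : ℕ} (h : ℕ → Term) (B : List (Atom S)) (Q : CQNeq S k) : Prop :=
  ∀ A ∈ B, A.mapTerms (Term.subst h) ∈ Q.body

/-- The size of an atom. -/
def Atom.size (A : Atom S) : ℕ := 1 + S.arity A.rel

/-- The size of a CQ query. -/
def CQSize {k : ℕ} (_head : Fin k → Term) (body : List (Atom S)) : ℕ :=
  k + (body.map Atom.size).sum

def CQ.size {k : ℕ} (Q : CQ S k) : ℕ := CQSize Q.head Q.body
def CQNeq.size {k : ℕ} (Q : CQNeq S k) : ℕ := CQSize Q.head Q.body + Q.diseqs.length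

/-! ### Normalization of conjunctions of atoms -/

/-- The original (renamed-apart) copy of a term: variable `x` becomes `2x`,
so that the fresh variables introduced by normalization (odd numbers) are new. -/
def Term.orig : Term → Term
  | .var x => .var (2 * x)
  | .const c => .const c

/-- The original (renamed) copy of an atom. -/
def Atom.orig (A : Atom S) : Atom S := A.mapTerms Term.orig

/-- The argument list of an atom. -/
def Atom.argsList (A : Atom S) : List Term := List.ofFn A.args

/-- The term in position `(j, i)` of a list of atoms, if any. -/
def atomArg? (B : List (Atom S)) (j i : ℕ) : Option Term :=
  match B[j]? with
  | none => none
  | some A => A.argsList[i]?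

/-- Whether the occurrence at position `(j, i)` is a duplicate occurrence,
i.e., the same variable or constant already occurs at an earlier position. -/
def isDup (B : List (Atom S)) (j i : ℕ) : Bool :=
  match atomArg? B j i with
  | none => false
  | some u =>
      (List.range B.length).any fun j' =>
        match B[j']? with
        | none => false
        | some A' =>
            (List.range A'.argsList.length).any fun i' =>
              (decide (j' < j) || (decide (j' = j) && decide (i' < i))) &&
              decide (A'.argsList[i']? = some u)

/-- The fresh variable replacing the duplicate occurrence at position `(j, i)`. -/
def freshVar (j i : ℕ) : Term := Term.var (2 * Nat.pair j i + 1)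

/-- The normalized copy of the atom at index `j` of `B`: each duplicate occurrence
of a variable or constant is replaced by a fresh distinct variable. -/
def normAtom (B : List (Atom S)) (j : ℕ) (A : Atom S) : Atom S :=
  ⟨A.rel, fun i => if isDup B j (i : ℕ) then freshVar j (i : ℕ) else (A.args i).orig⟩

/-- `ℛ(φ⁽ⁿ⁾)`: the relational part of the normalized version of a conjunction of
atoms. -/
def normBody (B : List (Atom S)) : List (Atom S) :=
  (B.zipIdx.map Prod.swap).map fun p => normAtom B p.1 p.2

/-- `ℰ(φ⁽ⁿ⁾)`: the equality atoms of the normalized version, equating each fresh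
variable with the term it replaced. -/
def normEqs (B : List (Atom S)) : List (Term × Term) :=
  ((B.zipIdx.map Prod.swap).map fun p =>
    (p.2.argsList.zipIdx.map Prod.swap).filterMap fun q =>
      if isDup B p.1 q.1 then some (freshVar p.1 q.1, q.2.orig) else none).flatten


/-! ### Generalized dependencies and the chase of `CQ^≠` queries with `Υ_{MΣ}` -/

/-- A disjunct of the consequent of a generalized dependency: an existentially
quantified conjunction of relational atoms, a conjunction of equalities, or a
single disequality.  (`false`, as in generalized implication constraints, is
represented by the absence of disjuncts.) -/
inductive GDisj (S : Schema) : Type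
  | exAtoms : List (Atom S) → GDisj S
  | eqs : List (Term × Term) → GDisj S
  | neq : Term → Term → GDisj S

/-- A generalized dependency: an antecedent (a conjunction of relational atoms)
and a finite disjunction of disjuncts. -/
structure GDep (S : Schema) : Type where
  ante : List (Atom S)
  disjs : List (GDisj S)

variable {S : Schema} {k : ℕ}

/-- Two terms are unequal for trivial reasons (distinct constants). -/
def diseqTaut (a b : Term) : Prop :=
  ∃ c d, a = Term.const c ∧ b = Term.const d ∧ c ≠ d

/-- A disjunct is already satisfied (is a tautology) in a `CQ^≠` query under a
trigger `h` (with `av` the variables of the antecedent). -/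
def disjSat (Q : CQNeq S k) (h : ℕ → Term) (av : Set ℕ) : GDisj S → Prop
  | .exAtoms ψ => ∃ h' : ℕ → Term, (∀ x ∈ av, h' x = h x) ∧
      ∀ A ∈ ψ, A.mapTerms (Term.subst h') ∈ Q.body
  | .eqs L => ∀ p ∈ L, p.1.subst h = p.2.subst h
  | .neq a b => diseqTaut (a.subst h) (b.subst h) ∨ Q.hasDiseq (a.subst h) (b.subst h)

/-- The result of a chase step on a `CQ^≠` query with an equality conjunct:
the query is rewritten by a substitution that realizes all the equalities,
fixes the constants, and is the identity outside the terms being equated.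
The step requires that none of the equated pairs be disequated in the query. -/
def eqsChild (Q : CQNeq S k) (h : ℕ → Term) (L : List (Term × Term)) (Q' : CQNeq S k) : Prop :=
  (∀ p ∈ L, ¬ Q.hasDiseq (p.1.subst h) (p.2.subst h)) ∧
  ∃ θ : Term → Term, (∀ c, θ (Term.const c) = Term.const c) ∧
    (∀ u, (∀ p ∈ L, u ≠ p.1.subst h ∧ u ≠ p.2.subst h) → θ u = u) ∧
    (∀ p ∈ L, θ (p.1.subst h) = θ (p.2.subst h)) ∧
    (∀ u, θ u = u ∨ ∃ p ∈ L, θ u = θ (p.1.subst h)) ∧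
    Q' = Q.mapTerms θ

/-- A chase step with an equality conjunct fails (e.g., it equates distinct
constants, or terms that are explicitly disequated in the query). -/
def eqsFails (Q : CQNeq S k) (h : ℕ → Term) (L : List (Term × Term)) : Prop :=
  ¬ ∃ Q', eqsChild Q h L Q'

/-- The result of a chase step with a disequality disjunct: the disequality is
added to the query. -/
def neqChild (Q : CQNeq S k) (h : ℕ → Term) (a b : Term) (Q' : CQNeq S k) : Prop :=
  a.subst h ≠ b.subst h ∧
  Q' = ⟨Q.head, Q.body, Q.diseqs ++ [(a.subst h, b.subst h)]⟩

/-- A chase step with a disequality disjunct fails: the two sides are the same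
variable or the same constant. -/
def neqFails (_Q : CQNeq S k) (h : ℕ → Term) (a b : Term) : Prop :=
  a.subst h = b.subst h

/-- The result of a chase step with an existential-atoms disjunct: the image of the
atoms is conjoined to the body, with fresh distinct variables for the
existential variables. -/
def exAtomsChild (Q : CQNeq S k) (h : ℕ → Term) (av : Set ℕ) (ψ : List (Atom S))
    (Q' : CQNeq S k) : Prop :=
  ∃ h' : ℕ → Term, (∀ x ∈ av, h' x = h x) ∧
    (∀ x ∈ BodyVars ψ, x ∉ av → ∃ y, h' x = Term.var y ∧ Term.var y ∉ Q.terms) ∧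
    Set.InjOn h' { x | x ∈ BodyVars ψ ∧ x ∉ av } ∧
    Q' = ⟨Q.head, Q.body ++ ψ.map (Atom.mapTerms (Term.subst h')), Q.diseqs⟩

/-- The (successful) results of applying one disjunct in a chase step. -/
def disjChild (Q : CQNeq S k) (h : ℕ → Term) (av : Set ℕ) :
    GDisj S → Set (Option (CQNeq S k))
  | .exAtoms ψ => { o | ∃ Q', o = some Q' ∧ exAtomsChild Q h av ψ Q' }
  | .eqs L => { o | ∃ Q', o = some Q' ∧ eqsChild Q h L Q' }
  | .neq a b => { o | ∃ Q', o = some Q' ∧ neqChild Q h a b Q' }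

/-- Whether applying a disjunct in a chase step fails. -/
def disjFails (Q : CQNeq S k) (h : ℕ → Term) : GDisj S → Prop
  | .exAtoms _ => False
  | .eqs L => eqsFails Q h L
  | .neq a b => neqFails Q h a b

/-- The set of results of one chase step with a generalized dependency `g` on a
`CQ^≠` query `Q` with trigger `h`: the successful results of the disjuncts, or
the trivial query `ε` (= `none`) if all disjuncts fail. -/
def gdepResults (g : GDep S) (Q : CQNeq S k) (h : ℕ → Term) : Set (Option (CQNeq S k)) :=
  { o | (∃ d ∈ g.disjs, o ∈ disjChild Q h (BodyVars g.ante) d)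
      ∨ (o = none ∧ ∀ d ∈ g.disjs, disjFails Q h d) }

/-- The possible chase steps with a generalized dependency on a `CQ^≠` query:
a trigger from the antecedent into the body such that no disjunct is already
satisfied, together with the resulting set of children. -/
def gdepSteps (g : GDep S) (Q : CQNeq S k) : Set (Set (Option (CQNeq S k))) :=
  { C | ∃ h : ℕ → Term, homTo h g.ante Q ∧
      (∀ d ∈ g.disjs, ¬ disjSat Q h (BodyVars g.ante) d) ∧ C = gdepResults g Q h }

/-- The `≠`-transformation `σ_(≠)` of a tgd `σ : φ → ∃z̄ ψ`:
`ℛ(φ⁽ⁿ⁾) → (∃z̄ ψ) ∨ ¬ℰ(φ⁽ⁿ⁾)`. -/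
def TGD.neqT (σ : TGD S) : GDep S :=
  ⟨normBody σ.body,
   GDisj.exAtoms (σ.head.map Atom.orig) :: (normEqs σ.body).map fun p => GDisj.neq p.1 p.2⟩

/-- The `≠`-transformation `σ_(≠)` of an egd `σ : φ → x₁ = x₂`:
`ℛ(φ⁽ⁿ⁾) → (x₁ = x₂) ∨ ¬ℰ(φ⁽ⁿ⁾)`. -/
def EGD.neqT (σ : EGD S) : GDep S :=
  ⟨normBody σ.body,
   GDisj.eqs [((Term.var σ.lhs).orig, (Term.var σ.rhs).orig)] ::
     (normEqs σ.body).map fun p => GDisj.neq p.1 p.2⟩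

/-- The `MV`-induced generalized implication constraint `ι_V` of a view `V` with
`MV[V] = ∅`:  `ℛ(φ⁽ⁿ⁾) → false ∨ ¬ℰ(φ⁽ⁿ⁾)`. -/
def MVSetting.gicDep (M : MVSetting) (v : M.views.idx) : GDep M.S :=
  ⟨normBody (M.views.defn v).body,
   (normEqs (M.views.defn v).body).map fun p => GDisj.neq p.1 p.2⟩

/-- The equalities `x̄ = t̄` between the (normalized) head vector of a view and a
tuple of `MV`. -/
def MVSetting.gnegdPairs (M : MVSetting) (v : M.views.idx)
    (t : Fin (M.views.arity v) → Val) : List (Term × Term) :=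
  List.ofFn fun i => (((M.views.defn v).head i).orig, (t i).toTerm)

/-- The possible chase steps with the `MV`-induced generalized negd `τ_V` of a view
`V` of positive arity with `MV[V] ≠ ∅`:
`ℛ(φ⁽ⁿ⁾) → ⋁_{i} (x̄ = t̄ᵢ) ∨ ¬ℰ(φ⁽ⁿ⁾)`, one equality disjunct per tuple of
`MV[V]`. -/
def MVSetting.gnegdSteps (M : MVSetting) {k : ℕ} (v : M.views.idx) (Q : CQNeq M.S k) :
    Set (Set (Option (CQNeq M.S k))) :=
  { C | (M.mv.rels v).Nonempty ∧ 1 ≤ M.views.arity v ∧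
      ∃ h : ℕ → Term, homTo h (normBody (M.views.defn v).body) Q ∧
        (∀ t ∈ M.mv.rels v,
          ¬ disjSat Q h (BodyVars (normBody (M.views.defn v).body)) (GDisj.eqs (M.gnegdPairs v t))) ∧
        (∀ p ∈ normEqs (M.views.defn v).body,
          ¬ disjSat Q h (BodyVars (normBody (M.views.defn v).body)) (GDisj.neq p.1 p.2)) ∧
        C = { o | (∃ t ∈ M.mv.rels v,
                    o ∈ disjChild Q h (BodyVars (normBody (M.views.defn v).body))
                        (GDisj.eqs (M.gnegdPairs v t)))
               ∨ (∃ p ∈ normEqs (M.views.defn v).body,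
                    o ∈ disjChild Q h (BodyVars (normBody (M.views.defn v).body))
                        (GDisj.neq p.1 p.2))
               ∨ (o = none ∧
                    (∀ t ∈ M.mv.rels v, disjFails Q h (GDisj.eqs (M.gnegdPairs v t))) ∧
                    (∀ p ∈ normEqs (M.views.defn v).body, disjFails Q h (GDisj.neq p.1 p.2))) } }

/-- The step system of the chase of `CQ^≠` queries with the dependencies
`Υ_{MΣ} = Φ_(MV) ∪ Σ_(≠)`: steps with the `≠`-transformations of the tgds and
egds of `Σ`, with the `MV`-induced generalized implication constraints, and with
the `MV`-induced generalized negds.  (`none` is the node `ε`.) -/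
def MVSetting.qSteps (M : MVSetting) (k : ℕ) :
    Option (CQNeq M.S k) → Set (Set (Option (CQNeq M.S k)))
  | none => ∅
  | some Q =>
    { C | (∃ σ : TGD M.S, Dep.tgd σ ∈ M.deps ∧ C ∈ gdepSteps σ.neqT Q)
        ∨ (∃ σ : EGD M.S, Dep.egd σ ∈ M.deps ∧ C ∈ gdepSteps σ.neqT Q)
        ∨ (∃ v, M.mv.rels v = ∅ ∧ C ∈ gdepSteps (M.gicDep v) Q)
        ∨ (∃ v, C ∈ M.gnegdSteps v Q) }

/-- One edge of the chase of `CQ^≠` queries with `Υ_{MΣ}`. -/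
def MVSetting.qStep (M : MVSetting) (k : ℕ) (a b : Option (CQNeq M.S k)) : Prop :=
  ∃ C ∈ M.qSteps k a, b ∈ C

/-- The `MΣ`-expansion `Q'` of a CQ query `Q`: the `CQ^≠` query (without
disequalities) obtained by conjoining the body of `Q` with `C^exp_MV`, the
expansion of `MV` over the base schema, in which all the variables of
`C^exp_MV` have been renamed apart from those of `Q` (the head variables of
each view definition being bound to the constants of the corresponding fact
of `MV`, and its nonhead variables being mapped to globally distinct fresh
variables). -/
def MVSetting.IsMSExpansion (M : MVSetting) {k : ℕ} (Q : CQ M.S k) (Q' : CQNeq M.S k) : Prop :=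
  Q'.head = Q.head ∧ Q'.diseqs = [] ∧
  ∃ ν : (v : M.views.idx) → (Fin (M.views.arity v) → Val) → ℕ → Term,
    (∀ v, ∀ t ∈ M.mv.rels v, ∀ i,
      ((M.views.defn v).head i).subst (ν v t) = (t i).toTerm) ∧
    (∀ v, ∀ t ∈ M.mv.rels v, ∀ x ∈ BodyVars (M.views.defn v).body,
      (¬ ∃ i, (M.views.defn v).head i = Term.var x) →
      ∃ y, ν v t x = Term.var y ∧
        (∀ i, Q.head i ≠ Term.var y) ∧ ¬ ∃ A ∈ Q.body, ∃ j, A.args j = Term.var y) ∧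
    (∀ v v' t t' x x', t ∈ M.mv.rels v → t' ∈ M.mv.rels v' →
      x ∈ BodyVars (M.views.defn v).body →
      (¬ ∃ i, (M.views.defn v).head i = Term.var x) →
      x' ∈ BodyVars (M.views.defn v').body →
      (¬ ∃ i, (M.views.defn v').head i = Term.var x') →
      ν v t x = ν v' t' x' → v = v' ∧ HEq t t' ∧ x = x') ∧
    { A | A ∈ Q'.body } =
      { A | A ∈ Q.body } ∪
      { A | ∃ v, ∃ t ∈ M.mv.rels v, ∃ A0 ∈ (M.views.defn v).body,
              A = A0.mapTerms (Term.subst (ν v t)) }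

/-- `R` is a chase result `(Q)^{MΣ}` of the `CQ^≠` query `Q0` with `Υ_{MΣ}`:
the `UCQ^≠` query whose components are the non-`ε` leaves of a (finite) chase
tree for `MΣ` and `Q0`. -/
def MVSetting.IsChaseResult (M : MVSetting) {k : ℕ} (Q0 : CQNeq M.S k)
    (R : List (CQNeq M.S k)) : Prop :=
  ∃ T : RTree (Option (CQNeq M.S k)), T.label = some Q0 ∧
    RTree.Valid (M.qSteps k) T ∧ R = T.leaves.filterMap id


/-! ### Complexity: polynomial time, `Π^p_2`, and concrete problem encodings -/

/-- A polynomial-time computable function on natural numbers (under the standard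
binary encoding), via Mathlib's Turing-machine model. -/
def PTimeFun (f : ℕ → ℕ) : Prop :=
  Nonempty (Turing.TM2ComputableInPolyTime
    Computability.encodingNatBool.encode Computability.encodingNatBool.encode f)

/-- Pairing of three inputs into one. -/
def tripleCode (x y z : ℕ) : ℕ := Nat.pair x (Nat.pair y z)

/-- Membership in `Π^p_2` (the second level of the polynomial hierarchy) of a
language of (binary-encoded) natural numbers: a `∀∃` certificate characterization
with polynomial certificate bounds and a polynomial-time verifier. -/
def InPi2P (L : Set ℕ) : Prop :=
  ∃ (c : ℕ) (f : ℕ → ℕ), PTimeFun f ∧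
    ∀ x, x ∈ L ↔ ∀ y, Nat.size y ≤ (Nat.size x + 1) ^ c →
      ∃ z, Nat.size z ≤ (Nat.size x + 1) ^ c ∧ f (tripleCode x y z) = 1

/-- Polynomial-time many-one reducibility. -/
def PolyReduces (A B : Set ℕ) : Prop :=
  ∃ f : ℕ → ℕ, PTimeFun f ∧ ∀ x, x ∈ A ↔ f x ∈ B

/-- `Π^p_2`-hardness of a language. -/
def Pi2PHard (L : Set ℕ) : Prop := ∀ A, InPi2P A → PolyReduces A L

instance : Encodable Term :=
  Encodable.ofEquiv (ℕ ⊕ ℕ)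
    { toFun := fun t => match t with | .var x => .inl x | .const c => .inr c
      invFun := fun s => match s with | .inl x => .var x | .inr c => .const c
      left_inv := fun t => by cases t <;> rfl
      right_inv := fun s => by cases s <;> rfl }

/-- A concrete schema: relation symbols `0, …, m-1` with given arities. -/
structure CSchema : Type where
  m : ℕ
  ar : Fin m → ℕ

/-- The schema denoted by a concrete schema. -/
abbrev CSchema.toSchema (C : CSchema) : Schema := ⟨Fin C.m, C.ar⟩

/-- A concrete finite set of views over a concrete schema:
view names `0, …, l-1` with arities, defined by safe CQ queries. -/
structure CViews (C : CSchema) : Type where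
  l : ℕ
  var : Fin l → ℕ
  defn : ∀ v : Fin l, CQ C.toSchema (var v)
  safe : ∀ v, (defn v).Safe

/-- The set of views denoted by a concrete set of views. -/
def CViews.toViews {C : CSchema} (W : CViews C) : Views C.toSchema :=
  ⟨Fin W.l, inferInstance, W.var, W.defn, W.safe⟩

/-- The concrete syntax of an atom over a concrete schema. -/
def Atom.syn {C : CSchema} (A : Atom C.toSchema) : ℕ × List Term :=
  (A.rel.val, List.ofFn A.args)

/-- The concrete syntax of a CQ query over a concrete schema. -/
def CQ.syn {C : CSchema} {k : ℕ} (Q : CQ C.toSchema k) : List Term × List (ℕ × List Term) :=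
  (List.ofFn Q.head, Q.body.map Atom.syn)

/-- The ground instance of the view schema denoted by a concrete list of view facts
(each a view index together with a list of constants). -/
def mvDen {C : CSchema} (W : CViews C) (L : List (ℕ × List ℕ)) : Inst W.toViews.schema :=
  ⟨fun v => { t | ∃ e ∈ L, e.1 = v.val ∧ ∃ hl : e.2.length = W.var v,
      t = fun i => Val.const (e.2.get (Fin.cast hl.symm i)) }⟩

/-- The certain-query-answer problem, as a language: the fixed parts are a schema,
a set of dependencies, and the view definitions; the input is (an encoding of) a
CQ query `Q`, a ground tuple `t̄` of length equal to the arity of `Q`, and a set of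
view answers `MV`, and the yes-instances are those in which `t̄` is a certain
answer to `Q` w.r.t. the setting `(P, Σ, V, MV)`. -/
def certLang (C : CSchema) (W : CViews C) (ds : Set (Dep C.toSchema))
    (h1 : ds.Finite) (h2 : ∀ d ∈ ds, d.ConstantFree) : Set ℕ :=
  { n | ∃ (k : ℕ) (Q : CQ C.toSchema k) (t : Fin k → ℕ) (L : List (ℕ × List ℕ)),
      n = Encodable.encode (Q.syn, List.ofFn t, L) ∧ Q.Safe ∧
      ∃ (hg : (mvDen W L).Ground) (hf : (mvDen W L).facts.Finite),
        constTuple t ∈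
          (MVSetting.mk (Frame.mk C.toSchema ds h1 h2 W.toViews) (mvDen W L) hg hf).certain
            Q.answer }

/-- The `MΣ`-conditional-containment problem, as a language: the fixed parts are a
schema, a set of dependencies, and the view definitions; the input is (an encoding
of) two CQ queries `Q₁, Q₂` of the same arity and a set of view answers `MV`, and
the yes-instances are those in which `Q₁ ⊑_{MΣ} Q₂` for the setting
`(P, Σ, V, MV)`. -/
def contLang (C : CSchema) (W : CViews C) (ds : Set (Dep C.toSchema))
    (h1 : ds.Finite) (h2 : ∀ d ∈ ds, d.ConstantFree) : Set ℕ :=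
  { n | ∃ (k : ℕ) (Q1 Q2 : CQ C.toSchema k) (L : List (ℕ × List ℕ)),
      n = Encodable.encode (Q1.syn, Q2.syn, L) ∧ Q1.Safe ∧ Q2.Safe ∧
      ∃ (hg : (mvDen W L).Ground) (hf : (mvDen W L).facts.Finite),
        (MVSetting.mk (Frame.mk C.toSchema ds h1 h2 W.toViews) (mvDen W L) hg hf).CondContained
          Q1.answer Q2.answer }

/-!
Backward direction: every step of the `MV`-enhanced chase adds facts or applies a map fixing
the constants, so every node still yields each tuple of `MV` as a view answer. At a leaf no
dependency of `Σ ∪ Σ^(MΣ)` is violated, so the view image is exactly `MV`; replacing the nulls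
by distinct fresh constants preserves `Σ` (which is constant-free) and the view image.

Forward direction: given a `Σ`-valid base instance `I`, chase while maintaining a homomorphism
`η` into `I`. Then no egd and no implication constraint fails, and a violated disjunctive egd
of a view always has the successful disjunct `η(x̄) ∈ MV`. For termination, every value gets a
level bounded by the ranks of the positions it occupies (the rank of a position, the largest
number of special edges on a path into it, is finite by weak acyclicity). Firing a tgd removes
its trigger for good from the finite set of candidate triggers at the level of the new nulls
and leaves the candidates of lower levels alone; every other step removes a null. So the
counts of unfired candidates per level, followed by the number of nulls, decrease
lexicographically.
-/

open Classical

instance : Countable Val := by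
  refine Function.Injective.countable
    (f := fun a : Val => (Val.casesOn a Sum.inl Sum.inr : ℕ ⊕ ℕ)) ?_
  rintro (a | a) (b | b) h <;> simp_all

lemma exists_reflTransGen_of_descent {α β : Type*} [LT β] [WellFoundedLT β] (f : α → β)
    {P Q : α → Prop} {r : α → α → Prop} (h : ∀ a, P a → Q a ∨ ∃ b, P b ∧ r a b ∧ f b < f a)
    (a : α) (ha : P a) : ∃ b, P b ∧ Relation.ReflTransGen r a b ∧ Q b := by
  induction a using (InvImage.wf f wellFounded_lt).induction with
  | _ a ih =>
    rcases h a ha with hq | ⟨b, hb, hab, hlt⟩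
    · exact ⟨a, ha, .refl, hq⟩
    · obtain ⟨c, hc, hbc, hq⟩ := ih b hlt hb
      exact ⟨c, hc, .head hab hbc, hq⟩

lemma finite_setOf_eqOn_compl_and_mapsTo {α β : Type*} {s : Set α} {A : Set β} (b : β)
    (hs : s.Finite) (hA : A.Finite) :
    {f : α → β | (∀ x ∉ s, f x = b) ∧ ∀ x ∈ s, f x ∈ A}.Finite := by
  have := hs.to_subtype
  have := hA.to_subtype
  refine @Set.toFinite _ _ (Finite.of_injective (fun f (x : s) => (⟨f.1 x, f.2.2 x x.2⟩ : A)) ?_)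
  intro f g hfg
  ext x
  by_cases hx : x ∈ s
  · exact congrArg Subtype.val (congrFun hfg ⟨x, hx⟩)
  · rw [f.2.1 x hx, g.2.1 x hx]

abbrev RelFact (S : Schema) : Type := (r : S.rel) × (Fin (S.arity r) → Val)

def FixesConsts (ρ : Val → Val) : Prop := ∀ c, ρ (Val.const c) = Val.const c

def Val.mapNulls (g : ℕ → Val) : Val → Val
  | .const c => .const c
  | .null n => g n

lemma Val.fixesConsts_mapNulls (g : ℕ → Val) : FixesConsts (Val.mapNulls g) := fun _ => rfl

lemma FixesConsts.eval_comp {ρ : Val → Val} (hρ : FixesConsts ρ) (ν : ℕ → Val) (u : Term) :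
    u.eval (fun x => ρ (ν x)) = ρ (u.eval ν) := by
  cases u with
  | var x => rfl
  | const c => exact (hρ c).symm

lemma FixesConsts.comp_ground {ρ : Val → Val} (hρ : FixesConsts ρ) {k : ℕ} {t : Fin k → Val}
    (ht : ∀ i, (t i).IsConst) : (fun i => ρ (t i)) = t := by
  funext i
  obtain ⟨c, hc⟩ := ht i
  rw [hc, hρ]

def IsHomVia (η : Val → Val) (J I : Inst S) : Prop :=
  FixesConsts η ∧ ∀ r, ∀ t ∈ J.rels r, (fun i => η (t i)) ∈ I.rels r

lemma Val.not_isConst_iff {a : Val} : ¬ a.IsConst ↔ ∃ n, a = .null n := by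
  cases a <;> simp [Val.IsConst]

namespace Inst

lemma mem_map_rels {ρ : Val → Val} {J : Inst S} {r : S.rel} {t : Fin (S.arity r) → Val} :
    t ∈ (J.map ρ).rels r ↔ ∃ u ∈ J.rels r, (fun i => ρ (u i)) = t := by
  constructor
  · rintro ⟨⟨r', u⟩, hu, heq⟩
    obtain ⟨rfl, hut⟩ := Sigma.mk.inj_iff.mp heq
    exact ⟨u, hu, eq_of_heq hut⟩
  · rintro ⟨u, hu, rfl⟩
    exact ⟨⟨r, u⟩, hu, rfl⟩

lemma mem_adom {J : Inst S} {a : Val} : a ∈ J.adom ↔ ∃ r, ∃ t ∈ J.rels r, ∃ i, t i = a :=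
  ⟨fun ⟨p, hp, i, hi⟩ => ⟨p.1, p.2, hp, i, hi⟩, fun ⟨r, t, ht, i, hi⟩ => ⟨⟨r, t⟩, ht, i, hi⟩⟩

lemma adom_map (ρ : Val → Val) (J : Inst S) : (J.map ρ).adom = ρ '' J.adom := by
  ext a
  simp only [mem_adom, mem_map_rels, Set.mem_image]
  constructor
  · rintro ⟨r, _, ⟨u, hu, rfl⟩, i, rfl⟩
    exact ⟨u i, ⟨r, u, hu, i, rfl⟩, rfl⟩
  · rintro ⟨b, ⟨r, u, hu, i, rfl⟩, rfl⟩
    exact ⟨r, _, ⟨u, hu, rfl⟩, i, rfl⟩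

lemma adom_finite {J : Inst S} (h : J.facts.Finite) : J.adom.Finite :=
  (h.biUnion fun p _ => Set.finite_range p.2).subset
    fun _ ⟨_, hp, i, hi⟩ => Set.mem_biUnion (t := fun p : RelFact S => Set.range p.2) hp ⟨i, hi⟩

lemma isHomVia_map {ρ : Val → Val} (hρ : FixesConsts ρ) (J : Inst S) : IsHomVia ρ J (J.map ρ) :=
  ⟨hρ, fun _ _ ht => mem_map_rels.mpr ⟨_, ht, rfl⟩⟩

lemma isHomVia_id_of_subset {J J' : Inst S} (h : J.facts ⊆ J'.facts) : IsHomVia id J J' :=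
  ⟨fun _ => rfl, fun r t ht => h (show (⟨r, t⟩ : RelFact S) ∈ J.facts from ht)⟩

end Inst

lemma factSet_finite (B : List (Atom S)) (ν : ℕ → Val) : (factSet B ν).Finite :=
  (B.finite_toSet.image fun A : Atom S => (⟨A.rel, fun i => (A.args i).eval ν⟩ : RelFact S)).subset
    fun _ ⟨A, hA, hp⟩ => ⟨A, hA, hp.symm⟩

namespace BodyHolds

variable {B : List (Atom S)} {I J : Inst S} {ν : ℕ → Val}

lemma congr {ν' : ℕ → Val} (hb : BodyHolds ν B I) (h : ∀ x ∈ BodyVars B, ν x = ν' x) :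
    BodyHolds ν' B I := by
  intro A hA
  convert hb A hA using 2 with i
  cases hu : A.args i with
  | var x => exact (h x ⟨A, hA, i, hu⟩).symm
  | const c => rfl

lemma mono (hb : BodyHolds ν B J) (h : J.facts ⊆ I.facts) : BodyHolds ν B I :=
  fun A hA => h (show (⟨A.rel, _⟩ : RelFact S) ∈ J.facts from hb A hA)

lemma comp {η : Val → Val} (hb : BodyHolds ν B J) (hη : IsHomVia η J I) :
    BodyHolds (fun x => η (ν x)) B I := by
  intro A hA
  convert hη.2 _ _ (hb A hA) using 2 with i
  exact hη.1.eval_comp ν (A.args i)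

lemma mem_adom (hb : BodyHolds ν B I) {x : ℕ} (hx : x ∈ BodyVars B) : ν x ∈ I.adom := by
  obtain ⟨A, hA, j, hj⟩ := hx
  exact Inst.mem_adom.mpr ⟨A.rel, _, hb A hA, j, by simp [hj, Term.eval]⟩

end BodyHolds

lemma bodyVars_finite (B : List (Atom S)) : (BodyVars B).Finite := by
  refine ((B.finite_toSet.biUnion fun A _ => Set.finite_range A.args).preimage
    (f := Term.var) fun _ _ _ _ h => Term.var.inj h).subset ?_
  rintro x ⟨A, hA, j, hj⟩
  exact Set.mem_biUnion hA ⟨j, hj⟩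

lemma CQ.comp_mem_answer {k : ℕ} (Q : CQ S k) {J I : Inst S} {η : Val → Val}
    (hη : IsHomVia η J I) {t : Fin k → Val} (ht : t ∈ Q.answer J) :
    (fun i => η (t i)) ∈ Q.answer I := by
  obtain ⟨ν, hb, rfl⟩ := ht
  exact ⟨_, hb.comp hη, funext fun i => (hη.1.eval_comp ν _).symm⟩

lemma CQ.consts_finite {k : ℕ} (Q : CQ S k) : Q.consts.Finite := by
  refine ((Set.finite_range Q.head).union (Q.body.finite_toSet.biUnion
    fun A _ => Set.finite_range A.args)).preimage (f := Term.const)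
    (fun _ _ _ _ h => Term.const.inj h) |>.subset ?_
  rintro c (⟨i, hi⟩ | ⟨A, hA, j, hj⟩)
  · exact .inl ⟨i, hi⟩
  · exact .inr (Set.mem_biUnion hA ⟨j, hj⟩)

lemma MVSetting.mv_rels_finite (M : MVSetting) (v : M.views.idx) : (M.mv.rels v).Finite :=
  M.mvFinite.preimage (f := fun t => (⟨v, t⟩ : RelFact M.views.schema))
    fun _ _ _ _ h => eq_of_heq (Sigma.mk.inj_iff.mp h).2

lemma MVSetting.mem_mv_adom (M : MVSetting) {v : M.views.idx} {t : Fin (M.views.arity v) → Val}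
    (ht : t ∈ M.mv.rels v) (i : Fin (M.views.arity v)) : t i ∈ M.mv.adom :=
  Inst.mem_adom.mpr ⟨v, t, ht, i, rfl⟩

lemma MVSetting.isConst_of_mem_mv_adom {M : MVSetting} {a : Val} (ha : a ∈ M.mv.adom) :
    a.IsConst := by
  obtain ⟨v, t, ht, i, rfl⟩ := Inst.mem_adom.mp ha
  exact M.mvGround v t ht i

lemma exists_fresh_null {A : Set Val} (hA : A.Finite) : ∃ N, ∀ n, N ≤ n → Val.null n ∉ A := by
  obtain ⟨N, hN⟩ := (hA.preimage fun _ _ _ _ h => Val.null.inj h).bddAbove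
  exact ⟨N + 1, fun n hn hA => by have := hN hA; omega⟩

noncomputable def TGD.freshExt (σ : TGD S) (h : ℕ → Val) (N : ℕ) : ℕ → Val :=
  fun x => if x ∈ BodyVars σ.body then h x else .null (N + x)

lemma TGD.freshExt_of_mem {σ : TGD S} {h : ℕ → Val} {N x : ℕ} (hx : x ∈ BodyVars σ.body) :
    σ.freshExt h N x = h x :=
  if_pos hx

lemma TGD.freshExt_of_notMem {σ : TGD S} {h : ℕ → Val} {N x : ℕ} (hx : x ∉ BodyVars σ.body) :
    σ.freshExt h N x = .null (N + x) :=
  if_neg hx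

noncomputable def TGD.fire (σ : TGD S) (J : Inst S) (h : ℕ → Val) (N : ℕ) : Inst S :=
  Inst.ofFacts (J.facts ∪ factSet σ.head (σ.freshExt h N))

lemma TGD.tgdStep_fire {σ : TGD S} {J : Inst S} {h : ℕ → Val} (hb : BodyHolds h σ.body J)
    (hns : ¬ ∃ g : ℕ → Val, (∀ x ∈ BodyVars σ.body, g x = h x) ∧ BodyHolds g σ.head J)
    {N : ℕ} (hN : ∀ n, N ≤ n → Val.null n ∉ J.adom) : tgdStep σ J (σ.fire J h N) := by
  refine ⟨h, hb, hns, σ.freshExt h N, fun x hx => σ.freshExt_of_mem hx, fun x _ hx => ?_,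
    fun x hx y hy hxy => ?_, rfl⟩
  · rw [σ.freshExt_of_notMem hx]
    exact ⟨⟨N + x, rfl⟩, hN _ (Nat.le_add_right _ _)⟩
  · have := Val.null.inj ((σ.freshExt_of_notMem hx.2).symm.trans
      (hxy.trans (σ.freshExt_of_notMem hy.2)))
    omega

def TGD.existentials (σ : TGD S) : Set ℕ := BodyVars σ.head \ BodyVars σ.body

lemma TGD.adom_fire_subset {σ : TGD S} (hcf : ∀ A ∈ σ.head, A.ConstantFree) {J : Inst S}
    {h : ℕ → Val} (hb : BodyHolds h σ.body J) (N : ℕ) :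
    (σ.fire J h N).adom ⊆ J.adom ∪ σ.freshExt h N '' σ.existentials := by
  rintro _ ⟨⟨r, t⟩, hp | ⟨A, hA, heq⟩, i, rfl⟩
  · exact .inl ⟨_, hp, i, rfl⟩
  · cases heq
    obtain ⟨y, hy⟩ := hcf A hA i
    show (A.args i).eval (σ.freshExt h N) ∈ _
    rw [hy]
    by_cases hyb : y ∈ BodyVars σ.body
    · exact .inl (by rw [Term.eval, σ.freshExt_of_mem hyb]; exact hb.mem_adom hyb)
    · exact .inr ⟨y, ⟨⟨A, hA, i, hy⟩, hyb⟩, rfl⟩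

def TGD.frontier (σ : TGD S) : Set ℕ := BodyVars σ.body ∩ BodyVars σ.head

lemma TGD.frontier_finite (σ : TGD S) : σ.frontier.Finite :=
  (bodyVars_finite _).inter_of_left _

noncomputable def TGD.frontierKey (σ : TGD S) (h : ℕ → Val) : ℕ → Val :=
  fun x => if x ∈ σ.frontier then h x else .const 0

lemma exists_tgdStep {σ : TGD S} {J : Inst S} (hfin : J.facts.Finite) {h : ℕ → Val}
    (hb : BodyHolds h σ.body J)
    (hns : ¬ ∃ g : ℕ → Val, (∀ x ∈ BodyVars σ.body, g x = h x) ∧ BodyHolds g σ.head J) :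
    ∃ J', tgdStep σ J J' :=
  have ⟨_, hN⟩ := exists_fresh_null (Inst.adom_finite hfin)
  ⟨_, TGD.tgdStep_fire hb hns hN⟩

lemma egdStepFail_or_exists_egdStepOk {σ : EGD S} {J : Inst S} {h : ℕ → Val}
    (hb : BodyHolds h σ.body J) (hne : h σ.lhs ≠ h σ.rhs) :
    egdStepFail σ J ∨ ∃ J', egdStepOk σ J J' := by
  cases hl : h σ.lhs with
  | null n => exact .inr ⟨_, h, hb, hne, .inl ⟨⟨n, hl⟩, rfl⟩⟩
  | const c =>
    cases hr : h σ.rhs with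
    | null m => exact .inr ⟨_, h, hb, hne, .inr ⟨⟨m, hr⟩, rfl⟩⟩
    | const d => exact .inl ⟨h, hb, hne, ⟨c, hl⟩, ⟨d, hr⟩⟩

lemma fixesConsts_replace_null {a b : Val} (ha : ∃ n, a = .null n) :
    FixesConsts fun x => if x = a then b else x := by
  obtain ⟨n, rfl⟩ := ha
  intro c
  simp

lemma mem_bodyVars_of_forall_eq {B : List (Atom S)} {I : Inst S} {a b : ℕ}
    (heq : ∀ ν, BodyHolds ν B I → ν a = ν b) {ν : ℕ → Val} (hb : BodyHolds ν B I) (hne : a ≠ b) :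
    a ∈ BodyVars B := by
  by_contra ha
  have hupd : ∀ w, BodyHolds (Function.update ν a w) B I := fun w =>
    hb.congr fun x hx => (Function.update_of_ne (fun (h : x = a) => ha (h ▸ hx)) _ _).symm
  have h0 := heq _ (hupd (.const 0))
  have h1 := heq _ (hupd (.const 1))
  rw [Function.update_self, Function.update_of_ne hne.symm] at h0 h1
  exact absurd (h0.trans h1.symm) (by simp)

lemma EGD.mem_bodyVars_of_holds {σ : EGD S} {I : Inst S} (hσ : σ.holds I) {ν : ℕ → Val}
    (hb : BodyHolds ν σ.body I) (hne : σ.lhs ≠ σ.rhs) :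
    σ.lhs ∈ BodyVars σ.body ∧ σ.rhs ∈ BodyVars σ.body :=
  ⟨mem_bodyVars_of_forall_eq hσ hb hne,
    mem_bodyVars_of_forall_eq (fun ν hb => (hσ ν hb).symm) hb hne.symm⟩

lemma BodyHolds.exists_lift {B : List (Atom S)} {J : Inst S} {ρ : Val → Val}
    (hinj : Set.InjOn ρ J.adom)
    (hconst : ∀ A ∈ B, ∀ j c, A.args j = .const c → ∀ a ∈ J.adom, ρ a = .const c → a = .const c)
    {ν : ℕ → Val} (hb : BodyHolds ν B (J.map ρ)) :
    ∃ ν', BodyHolds ν' B J ∧ ∀ x ∈ BodyVars B, ρ (ν' x) = ν x := by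
  have hpre : ∀ x ∈ BodyVars B, ∃ a ∈ J.adom, ρ a = ν x := by
    rintro x ⟨A, hA, j, hj⟩
    obtain ⟨u, hu, hρu⟩ := Inst.mem_map_rels.mp (hb A hA)
    exact ⟨u j, Inst.mem_adom.mpr ⟨_, u, hu, j, rfl⟩, by simpa [hj, Term.eval] using congrFun hρu j⟩
  have : Nonempty Val := ⟨.const 0⟩
  choose! ν' hν'adom hν' using hpre
  refine ⟨ν', fun A hA => ?_, hν'⟩
  obtain ⟨u, hu, hρu⟩ := Inst.mem_map_rels.mp (hb A hA)
  convert hu using 1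
  funext j
  have hρj : ρ (u j) = (A.args j).eval ν := congrFun hρu j
  have huj : u j ∈ J.adom := Inst.mem_adom.mpr ⟨_, u, hu, j, rfl⟩
  cases hj : A.args j with
  | var x =>
    have hx : x ∈ BodyVars B := ⟨A, hA, j, hj⟩
    rw [hj] at hρj
    exact hinj (hν'adom x hx) huj ((hν' x hx).trans hρj.symm)
  | const c =>
    rw [hj] at hρj
    exact (hconst A hA j c hj _ huj hρj).symm

lemma Dep.holds_map {d : Dep S} (hcf : d.ConstantFree) {J : Inst S} {ρ : Val → Val}
    (hρ : FixesConsts ρ) (hinj : Set.InjOn ρ J.adom) (hd : d.holds J) : d.holds (J.map ρ) := by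
  have hnoconst : ∀ B : List (Atom S), (∀ A ∈ B, A.ConstantFree) →
      ∀ A ∈ B, ∀ j c, A.args j = .const c → ∀ a ∈ J.adom, ρ a = .const c → a = .const c := by
    intro B hB A hA j c hj
    obtain ⟨x, hx⟩ := hB A hA j
    exact absurd (hx.symm.trans hj) (by simp)
  cases d with
  | tgd σ =>
    intro ν hb
    obtain ⟨ν', hb', hν'⟩ := hb.exists_lift hinj (hnoconst _ hcf.1)
    obtain ⟨μ, hμ, hμh⟩ := hd ν' hb'
    refine ⟨fun x => if x ∈ BodyVars σ.body then ν x else ρ (μ x), fun x hx => if_pos hx, ?_⟩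
    refine (hμh.comp (Inst.isHomVia_map hρ J)).congr fun x _ => ?_
    split_ifs with hx
    · rw [hμ x hx, hν' x hx]
    · rfl
  | egd σ =>
    intro ν hb
    obtain ⟨ν', hb', hν'⟩ := hb.exists_lift hinj (hnoconst _ hcf)
    by_cases hlr : σ.lhs = σ.rhs
    · rw [hlr]
    obtain ⟨hl, hr⟩ := σ.mem_bodyVars_of_holds hd hb' hlr
    rw [← hν' _ hl, ← hν' _ hr, hd ν' hb']

/-- Nulls go to distinct constants above those of `J` and `C`. -/
lemma Inst.exists_grounding {J : Inst S} (hfin : J.facts.Finite) {C : Set ℕ} (hC : C.Finite) :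
    ∃ ρ : Val → Val, FixesConsts ρ ∧ Set.InjOn ρ J.adom ∧ (∀ a, (ρ a).IsConst) ∧
      ∀ a, ∀ c ∈ C, ρ a = .const c → a = .const c := by
  obtain ⟨N, hN⟩ := (((adom_finite hfin).preimage fun _ _ _ _ h => Val.const.inj h).union
    hC).bddAbove
  set ρ := Val.mapNulls fun n => .const (N + 1 + n)
  have hsmall : ∀ a c, ρ a = .const c → c ≤ N → a = .const c := by
    rintro (c | m) d h hd
    · exact h
    · have : N + 1 + m = d := Val.const.inj h
      omega
  refine ⟨ρ, Val.fixesConsts_mapNulls _, ?_, fun a => ?_,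
    fun a c hc h => hsmall a c h (hN (.inr hc))⟩
  · have hadom : ∀ c, Val.const c ∈ J.adom → c ≤ N := fun c hc => hN (.inl hc)
    rintro (c | m) ha (d | m') hb h
    · exact h
    · exact (hsmall _ _ h.symm (hadom c ha)).symm
    · exact hsmall _ _ h (hadom d hb)
    · have : N + 1 + m = N + 1 + m' := Val.const.inj h
      rw [show m = m' by omega]
  · cases a with
    | const c => exact ⟨c, rfl⟩
    | null m => exact ⟨N + 1 + m, rfl⟩

namespace MVSetting

variable {M : MVSetting}

lemma mvStep_of_depStepTo {J J' : Inst M.S} (h : depStepTo M.deps J J') :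
    M.mvStep (some J) (some J') := by
  rcases h with ⟨σ, hσ, hs⟩ | ⟨σ, hσ, hs⟩
  · exact ⟨_, .inl ⟨σ, hσ, J', hs, rfl⟩, rfl⟩
  · exact ⟨_, .inr (.inl ⟨σ, hσ, J', hs, rfl⟩), rfl⟩

lemma mvReach_of_depChase {J J' : Inst M.S} (h : Relation.ReflTransGen (depStepTo M.deps) J J') :
    M.mvReach (some J) (some J') :=
  Relation.ReflTransGen.lift some (fun _ _ => mvStep_of_depStepTo) _ _ h

lemma finite_and_isHomVia_of_mvStep {J J' : Inst M.S} (h : M.mvStep (some J) (some J'))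
    (hfin : J.facts.Finite) : J'.facts.Finite ∧ ∃ ρ, IsHomVia ρ J J' := by
  have hmap : ∀ ρ, FixesConsts ρ → J' = J.map ρ → J'.facts.Finite ∧ ∃ ρ, IsHomVia ρ J J' := by
    rintro ρ hρ rfl
    exact ⟨hfin.image _, ρ, Inst.isHomVia_map hρ J⟩
  obtain ⟨C, hC, hmem⟩ := h
  rcases hC with ⟨σ, -, J'', hs, rfl⟩ | ⟨σ, -, J'', hs, rfl⟩ | ⟨-, -, -, rfl⟩ | ⟨-, -, -, rfl⟩ |
    ⟨v, -, -, h, -, -, rfl⟩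
  · obtain ⟨-, -, -, _, -, -, -, hJ''⟩ := hs
    rw [Option.some_injective _ hmem, hJ'']
    exact ⟨hfin.union (factSet_finite _ _), id, Inst.isHomVia_id_of_subset Set.subset_union_left⟩
  · have hJ' : J' = J'' := Option.some_injective _ hmem
    obtain ⟨_, -, -, ⟨hn, hJ''⟩ | ⟨hn, hJ''⟩⟩ := hs
    · exact hmap _ (fixesConsts_replace_null hn) (hJ'.trans hJ'')
    · exact hmap _ (fixesConsts_replace_null hn) (hJ'.trans hJ'')
  · cases hmem
  · cases hmem
  · rcases hmem with ⟨-, -, J'', heq, ρ, hρ, -, -, rfl⟩ | ⟨heq, -⟩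
    · exact hmap ρ hρ (Option.some_injective _ heq)
    · cases heq

lemma mvReach_induction {P : Inst M.S → Prop}
    (hP : ∀ J J', M.mvStep (some J) (some J') → P J → P J') {J K : Inst M.S}
    (h : M.mvReach (some J) (some K)) (hJ : P J) : P K := by
  suffices ∀ o, M.mvReach (some J) o → ∀ K, o = some K → P K from this _ h K rfl
  intro o ho
  induction ho with
  | refl => rintro K ⟨⟩; exact hJ
  | @tail a b _ hab ih =>
    rintro K rfl
    cases a with
    | none => obtain ⟨C, hC, -⟩ := hab; exact hC.elim
    | some L => exact hP L K hab (ih L rfl)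

lemma satisfiesAll_and_answer_subset_of_leaf {J : Inst M.S} (hfin : J.facts.Finite)
    (hleaf : M.mvChaseSteps (some J) = ∅) :
    J.satisfiesAll M.deps ∧ ∀ v, (M.views.defn v).answer J ⊆ M.mv.rels v := by
  have hno : ∀ C, C ∉ M.mvChaseSteps (some J) := fun C hC => by rw [hleaf] at hC; exact hC
  refine ⟨fun d hd => ?_, fun v t ⟨h, hb, ht⟩ => ?_⟩
  · cases d with
    | tgd σ =>
      intro ν hb
      by_contra hns
      obtain ⟨J', hs⟩ := exists_tgdStep hfin hb hns
      exact hno _ (.inl ⟨σ, hd, J', hs, rfl⟩)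
    | egd σ =>
      intro ν hb
      by_contra hne
      rcases egdStepFail_or_exists_egdStepOk hb hne with hf | ⟨J', hs⟩
      · exact hno _ (.inr (.inr (.inl ⟨σ, hd, hf, rfl⟩)))
      · exact hno _ (.inr (.inl ⟨σ, hd, J', hs, rfl⟩))
  · rcases (M.mv.rels v).eq_empty_or_nonempty with hv | hv
    · exact (hno _ (.inr (.inr (.inr (.inl ⟨v, hv, ⟨h, hb⟩, rfl⟩))))).elim
    obtain ⟨t', ht'⟩ := hv
    rcases Nat.eq_zero_or_pos (M.views.arity v) with h0 | hpos
    · obtain rfl : t = t' := funext fun i : Fin _ => absurd i.isLt (by omega)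
      exact ht'
    by_contra hnt
    refine hno _ (.inr (.inr (.inr (.inr ⟨v, ⟨t', ht'⟩, hpos, h, hb, fun t'' ht'' => ?_, rfl⟩))))
    by_contra hall
    push Not at hall
    have : headVals (M.views.defn v) h = t'' := funext hall
    exact hnt (by rw [ht]; rwa [← this] at ht'')

lemma finite_and_mv_subset_answer_of_preSolution {J0 : Inst M.S} (hp : M.IsPreSolution J0) :
    J0.facts.Finite ∧ ∀ v, M.mv.rels v ⊆ (M.views.defn v).answer J0 := by
  obtain ⟨ν, hhead, -, -, hfacts⟩ := hp
  have : Finite M.views.schema.rel := M.views.finite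
  refine ⟨hfacts ▸ Set.finite_iUnion fun v =>
    (M.mv_rels_finite v).biUnion fun t _ => factSet_finite _ _, fun v t ht => ?_⟩
  refine ⟨ν v t, fun A hA => ?_, funext fun i => (hhead v t ht i).symm⟩
  show (⟨A.rel, _⟩ : RelFact M.S) ∈ J0.facts
  rw [hfacts]
  exact Set.mem_iUnion.mpr ⟨v, Set.mem_biUnion ht ⟨A, hA, rfl⟩⟩

lemma valid_of_answer_eq {J : Inst M.S} (hfin : J.facts.Finite) (hsat : J.satisfiesAll M.deps)
    (hans : ∀ v, (M.views.defn v).answer J = M.mv.rels v) : M.Valid := by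
  have : Finite M.views.idx := M.views.finite
  obtain ⟨ρ, hρ, hinj, hground, hconst⟩ := Inst.exists_grounding hfin
    (Set.finite_iUnion fun v => CQ.consts_finite (M.views.defn v))
  have hlift : ∀ v ν, BodyHolds ν (M.views.defn v).body (J.map ρ) →
      ∃ ν', BodyHolds ν' (M.views.defn v).body J ∧
        ∀ i, ((M.views.defn v).head i).eval ν = ρ (((M.views.defn v).head i).eval ν') := by
    intro v ν hb
    obtain ⟨ν', hb', hν'⟩ := hb.exists_lift hinj fun A hA j c hj a _ =>
      hconst a c (Set.mem_iUnion.mpr ⟨v, .inr ⟨A, hA, j, hj⟩⟩)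
    refine ⟨ν', hb', fun i => ?_⟩
    cases hi : (M.views.defn v).head i with
    | var x =>
      obtain ⟨A, hA, j, hj⟩ := (M.views.safe v).2 x ⟨i, hi⟩
      exact (hν' x ⟨A, hA, j, hj⟩).symm
    | const c => exact (hρ c).symm
  refine ⟨J.map ρ, fun r t ht i => ?_, fun d hd => ?_, fun v => ?_⟩
  · obtain ⟨u, -, rfl⟩ := Inst.mem_map_rels.mp ht
    exact hground (u i)
  · exact Dep.holds_map (M.depsConstantFree d hd) hρ hinj (hsat d hd)
  · ext t
    constructor
    · rintro ⟨ν, hb, rfl⟩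
      obtain ⟨ν', hb', hν'⟩ := hlift v ν hb
      have ht' : (fun i => ((M.views.defn v).head i).eval ν') ∈ M.mv.rels v :=
        hans v ▸ ⟨ν', hb', rfl⟩
      have hground := hρ.comp_ground (M.mvGround v _ ht')
      rw [funext hν']
      exact hground ▸ ht'
    · intro ht
      rw [← hρ.comp_ground (M.mvGround v t ht)]
      exact CQ.comp_mem_answer _ (Inst.isHomVia_map hρ J) (hans v ▸ ht)

theorem valid_of_isVVSolution {J : Inst M.S} (hJ : M.IsVVSolution J) : M.Valid := by
  obtain ⟨Jde, ⟨J0, hpre, hchase, -⟩, hreach, hleaf⟩ := hJ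
  have hinv : J.facts.Finite ∧ ∀ v, M.mv.rels v ⊆ (M.views.defn v).answer J := by
    refine mvReach_induction
      (P := fun K => K.facts.Finite ∧ ∀ v, M.mv.rels v ⊆ (M.views.defn v).answer K)
      (fun K K' hstep ⟨hfin, hcov⟩ => ?_)
      ((mvReach_of_depChase hchase).trans hreach) (finite_and_mv_subset_answer_of_preSolution hpre)
    obtain ⟨hfin', ρ, hρ⟩ := finite_and_isHomVia_of_mvStep hstep hfin
    refine ⟨hfin', fun v t ht => ?_⟩
    rw [← hρ.1.comp_ground (M.mvGround v t ht)]
    exact CQ.comp_mem_answer _ hρ (hcov v ht)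
  obtain ⟨hsat, hsub⟩ := satisfiesAll_and_answer_subset_of_leaf hinv.1 hleaf
  exact valid_of_answer_eq hinv.1 hsat fun v => (hsub v).antisymm (hinv.2 v)

end MVSetting

inductive SpecialPath (D : Set (Dep S)) : ℕ → Pos S → Pos S → Prop
  | refl (p : Pos S) : SpecialPath D 0 p p
  | edge {n : ℕ} {p q r : Pos S} : SpecialPath D n p q → DepEdge D q r → SpecialPath D n p r
  | special {n : ℕ} {p q r : Pos S} (σ : TGD S) : SpecialPath D n p q → Dep.tgd σ ∈ D →
      σ.SpecialEdge q r → SpecialPath D (n + 1) p r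

def specialEdges (D : Set (Dep S)) : Set (Pos S × Pos S) :=
  {e | ∃ σ : TGD S, Dep.tgd σ ∈ D ∧ σ.SpecialEdge e.1 e.2}

lemma finite_setOf_occursAt (B : List (Atom S)) : {p : Pos S | ∃ x, OccursAt B x p}.Finite := by
  refine (B.finite_toSet.biUnion fun A _ =>
    Set.finite_range fun i : Fin (S.arity A.rel) => ((A.rel, (i : ℕ)) : Pos S)).subset ?_
  rintro p ⟨x, A, hA, hrel, i, hi, -⟩
  exact Set.mem_biUnion hA ⟨i, Prod.ext hrel hi⟩

lemma specialEdges_finite {D : Set (Dep S)} (hD : D.Finite) : (specialEdges D).Finite := by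
  refine ((hD.preimage (f := Dep.tgd) fun _ _ _ _ h => Dep.tgd.inj h).biUnion fun σ _ =>
    (finite_setOf_occursAt σ.body).prod (finite_setOf_occursAt σ.head)).subset ?_
  rintro ⟨p, q⟩ ⟨σ, hσ, x, y, hx, -, -, -, hy⟩
  exact Set.mem_biUnion (show σ ∈ Dep.tgd ⁻¹' D from hσ) ⟨⟨x, hx⟩, ⟨y, hy⟩⟩

/-- Weak acyclicity: the special edges on a path are pairwise distinct, since each of them
reaches the end of the path. -/
lemma SpecialPath.le_ncard_specialEdges {D : Set (Dep S)} (hD : D.Finite)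
    (hwa : WeaklyAcyclic D) {n : ℕ} {p q : Pos S} (h : SpecialPath D n p q) :
    n ≤ (specialEdges D).ncard := by
  suffices ∃ s : Finset (Pos S × Pos S), s.card = n ∧
      ∀ e ∈ s, e ∈ specialEdges D ∧ Relation.ReflTransGen (DepEdge D) e.2 q by
    obtain ⟨s, rfl, hs⟩ := this
    rw [← Set.ncard_coe_finset]
    exact Set.ncard_le_ncard (fun e he => (hs e he).1) (specialEdges_finite hD)
  induction h with
  | refl p => exact ⟨∅, rfl, by simp⟩
  | edge _ hqr ih =>
    obtain ⟨s, hcard, hs⟩ := ih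
    exact ⟨s, hcard, fun e he => ⟨(hs e he).1, (hs e he).2.tail hqr⟩⟩
  | @special n p q r σ _ hσ hqr ih =>
    obtain ⟨s, hcard, hs⟩ := ih
    have hnew : (q, r) ∉ s := fun hmem => hwa ⟨σ, q, r, hσ, hqr, (hs _ hmem).2⟩
    refine ⟨insert (q, r) s, by rw [Finset.card_insert_of_notMem hnew, hcard], fun e he => ?_⟩
    rcases Finset.mem_insert.mp he with rfl | he
    · exact ⟨⟨σ, hσ, hqr⟩, .refl⟩
    · exact ⟨(hs e he).1, (hs e he).2.tail ⟨σ, hσ, .inr hqr⟩⟩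

noncomputable def rank (D : Set (Dep S)) (p : Pos S) : ℕ := sSup {n | ∃ q, SpecialPath D n q p}

section Rank

variable {D : Set (Dep S)}

lemma bddAbove_specialPath (hD : D.Finite) (hwa : WeaklyAcyclic D) (p : Pos S) :
    BddAbove {n | ∃ q, SpecialPath D n q p} :=
  ⟨_, fun _ ⟨_, h⟩ => SpecialPath.le_ncard_specialEdges hD hwa h⟩

lemma exists_specialPath_rank (hD : D.Finite) (hwa : WeaklyAcyclic D) (p : Pos S) :
    ∃ q, SpecialPath D (rank D p) q p :=
  Nat.sSup_mem (s := {n | ∃ q, SpecialPath D n q p}) ⟨0, p, .refl p⟩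
    (bddAbove_specialPath hD hwa p)

lemma rank_le_ncard_specialEdges (hD : D.Finite) (hwa : WeaklyAcyclic D) (p : Pos S) :
    rank D p ≤ (specialEdges D).ncard :=
  have ⟨_, hp⟩ := exists_specialPath_rank hD hwa p
  hp.le_ncard_specialEdges hD hwa

lemma rank_le_of_depEdge (hD : D.Finite) (hwa : WeaklyAcyclic D) {p q : Pos S}
    (h : DepEdge D p q) : rank D p ≤ rank D q :=
  have ⟨_, hp⟩ := exists_specialPath_rank hD hwa p
  le_csSup (bddAbove_specialPath hD hwa q) ⟨_, hp.edge h⟩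

lemma rank_lt_of_specialEdge (hD : D.Finite) (hwa : WeaklyAcyclic D) {σ : TGD S}
    (hσ : Dep.tgd σ ∈ D) {p q : Pos S} (h : σ.SpecialEdge p q) : rank D p < rank D q :=
  have ⟨_, hp⟩ := exists_specialPath_rank hD hwa p
  le_csSup (bddAbove_specialPath hD hwa q) ⟨_, hp.special σ hσ h⟩

end Rank

namespace MVSetting

variable {M : MVSetting}

lemma exists_preSolution_isHomVia {I : Inst M.S} (hvb : M.ValidBase I) :
    ∃ J0 η, M.IsPreSolution J0 ∧ IsHomVia η J0 I := by
  have hwit : ∀ v t, ∃ μ : ℕ → Val, t ∈ M.mv.rels v →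
      BodyHolds μ (M.views.defn v).body I ∧ ∀ i, ((M.views.defn v).head i).eval μ = t i := by
    intro v t
    by_cases ht : t ∈ M.mv.rels v
    · obtain ⟨μ, hb, rfl⟩ : t ∈ (M.views.defn v).answer I := (hvb.2.2 v).symm ▸ ht
      exact ⟨μ, fun _ => ⟨hb, fun _ => rfl⟩⟩
    · exact ⟨fun _ => .const 0, fun h => absurd h ht⟩
  choose μ hμ using hwit
  have : Finite M.views.idx := M.views.finite
  obtain ⟨f, hf⟩ : ∃ f : (Σ v : M.views.idx, (Fin (M.views.arity v) → Val) × ℕ) → ℕ,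
      Function.Injective f := countable_iff_exists_injective _ |>.mp inferInstance
  -- In the copy of the body for `t ∈ MV[v]`, a nonhead variable `x` becomes the null
  -- `f ⟨v, t, x⟩`, which `η` sends back to the witness value `μ v t x`.
  let ν v t x := if ∃ i, (M.views.defn v).head i = .var x then μ v t x else .null (f ⟨v, t, x⟩)
  let η := Val.mapNulls (Function.extend f (fun b => μ b.1 b.2.1 b.2.2) .null)
  have hνhead : ∀ v t i,
      ((M.views.defn v).head i).eval (ν v t) = ((M.views.defn v).head i).eval (μ v t) := by
    intro v t i
    cases hi : (M.views.defn v).head i with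
    | var x => exact if_pos ⟨i, hi⟩
    | const c => rfl
  have hην : ∀ v, ∀ t ∈ M.mv.rels v, ∀ x, η (ν v t x) = μ v t x := by
    intro v t ht x
    by_cases hx : ∃ i, (M.views.defn v).head i = .var x
    · obtain ⟨i, hi⟩ := hx
      have hμx : μ v t x = t i := by simpa [hi, Term.eval] using (hμ v t ht).2 i
      obtain ⟨c, hc⟩ := M.mvGround v t ht i
      rw [show ν v t x = μ v t x from if_pos ⟨i, hi⟩, hμx, hc]
      rfl
    · rw [show ν v t x = .null (f ⟨v, t, x⟩) from if_neg hx]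
      exact hf.extend_apply (fun b => μ b.1 b.2.1 b.2.2) Val.null ⟨v, t, x⟩
  refine ⟨Inst.ofFacts (⋃ v, ⋃ t ∈ M.mv.rels v, factSet (M.views.defn v).body (ν v t)), η,
    ⟨ν, fun v t ht i => (hνhead v t i).trans ((hμ v t ht).2 i), fun v t _ x _ hx => ⟨_, if_neg hx⟩,
      fun v v' t t' x x' _ _ _ hx _ hx' h => ?_, rfl⟩, Val.fixesConsts_mapNulls _, ?_⟩
  · simp only [ν, if_neg hx, if_neg hx', Val.null.injEq] at h
    obtain ⟨rfl, h⟩ := Sigma.mk.inj_iff.mp (hf h)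
    obtain ⟨rfl, rfl⟩ := Prod.ext_iff.mp (eq_of_heq h)
    exact ⟨rfl, .rfl, rfl⟩
  · rintro r tup htup
    obtain ⟨v, hv⟩ := Set.mem_iUnion.mp htup
    obtain ⟨t, ht, A, hA, heq⟩ := Set.mem_iUnion₂.mp hv
    cases heq
    have hb : BodyHolds (fun x => η (ν v t x)) (M.views.defn v).body I :=
      (hμ v t ht).1.congr fun x _ => (hην v t ht x).symm
    convert hb A hA using 2 with i
    exact ((Val.fixesConsts_mapNulls _).eval_comp _ _).symm

/-- A node of the chase guided by a `Σ`-valid base instance: the current instance `J`, a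
homomorphism `eta` into the base instance, a level for every value (bounded by the ranks
of the positions where it occurs), the values created so far, and the tgd triggers fired
so far, each recorded as a tgd with the frontier part of its trigger. -/
structure GuidedState (M : MVSetting) : Type where
  J : Inst M.S
  eta : Val → Val
  lvl : Val → ℕ
  used : Set Val
  fired : Set (TGD M.S × (ℕ → Val))

namespace GuidedState

structure Inv (I : Inst M.S) (s : GuidedState M) : Prop where
  finite : s.J.facts.Finite
  hom : IsHomVia s.eta s.J I
  used_finite : s.used.Finite
  adom_subset : s.J.adom ⊆ s.used
  mv_adom_subset : M.mv.adom ⊆ s.used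
  lvl_const : ∀ a ∈ s.used, a.IsConst → s.lvl a = 0
  lvl_le_rank : ∀ r, ∀ t ∈ s.J.rels r, ∀ i : Fin (M.S.arity r), s.lvl (t i) ≤ rank M.deps (r, i)
  fired_used : ∀ e ∈ s.fired, ∀ x ∈ e.1.frontier, e.2 x ∈ s.used
  /-- Nulls never come back, so a fired trigger is never active again. -/
  fired_done : ∀ e ∈ s.fired, (∃ x ∈ e.1.frontier, e.2 x ∉ s.J.adom ∧ ¬ (e.2 x).IsConst) ∨
    ∃ g : ℕ → Val, (∀ x ∈ e.1.frontier, g x = e.2 x) ∧ BodyHolds g e.1.head s.J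

def candidates (s : GuidedState M) (r : ℕ) : Set (TGD M.S × (ℕ → Val)) :=
  {e | Dep.tgd e.1 ∈ M.deps ∧ (∀ x ∉ e.1.frontier, e.2 x = .const 0) ∧
    ∀ x ∈ e.1.frontier, e.2 x ∈ s.used ∧ s.lvl (e.2 x) < r}

noncomputable def nullCount (J : Inst M.S) : ℕ := {a | a ∈ J.adom ∧ ¬ a.IsConst}.ncard

noncomputable def measure (s : GuidedState M) :
    Lex (Fin ((specialEdges M.deps).ncard + 2) → ℕ) ×ₗ ℕ :=
  toLex (toLex fun r => (s.candidates r \ s.fired).ncard, nullCount s.J)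

variable {I : Inst M.S} {s : GuidedState M}

lemma candidates_finite (inv : s.Inv I) (r : ℕ) : (s.candidates r).Finite := by
  refine ((M.depsFinite.preimage (f := Dep.tgd) fun _ _ _ _ h => Dep.tgd.inj h).biUnion
    fun σ _ => (Set.finite_singleton σ).prod (finite_setOf_eqOn_compl_and_mapsTo (.const 0)
      σ.frontier_finite inv.used_finite)).subset ?_
  rintro ⟨σ, f⟩ ⟨hσ, hout, hin⟩
  exact Set.mem_biUnion (show σ ∈ Dep.tgd ⁻¹' M.deps from hσ)
    ⟨rfl, hout, fun x hx => (hin x hx).1⟩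

def collapse (s : GuidedState M) (ρ : Val → Val) : GuidedState M := { s with J := s.J.map ρ }

section Collapse

variable {ρ : Val → Val}

lemma notMem_image_of_moved (hidem : ∀ a, ρ (ρ a) = ρ a) {a : Val} (ha : ρ a ≠ a) (A : Set Val) :
    a ∉ ρ '' A :=
  fun ⟨b, _, hb⟩ => ha (hb ▸ hidem b)

lemma Inv.collapse (inv : s.Inv I) (hρ : FixesConsts ρ) (hidem : ∀ a, ρ (ρ a) = ρ a)
    (hinto : ∀ a ∈ s.J.adom, ρ a ∈ s.J.adom ∪ M.mv.adom)
    (heta : ∀ a ∈ s.J.adom, s.eta (ρ a) = s.eta a)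
    (hlvl : ∀ a ∈ s.J.adom, s.lvl (ρ a) ≤ s.lvl a) : (s.collapse ρ).Inv I := by
  have hadom : (s.collapse ρ).J.adom = ρ '' s.J.adom := Inst.adom_map ρ s.J
  have hused : ∀ a ∈ s.J.adom, ρ a ∈ s.used := fun a ha =>
    (hinto a ha).elim (fun h => inv.adom_subset h) (fun h => inv.mv_adom_subset h)
  have hmem : ∀ r, ∀ t ∈ s.J.rels r, ∀ i, t i ∈ s.J.adom := fun r t ht i =>
    Inst.mem_adom.mpr ⟨r, t, ht, i, rfl⟩
  refine ⟨inv.finite.image _, ⟨inv.hom.1, fun r t ht => ?_⟩, inv.used_finite, ?_,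
    inv.mv_adom_subset, inv.lvl_const, fun r t ht i => ?_, inv.fired_used, fun e he => ?_⟩
  · obtain ⟨u, hu, rfl⟩ := Inst.mem_map_rels.mp ht
    convert inv.hom.2 r u hu using 2 with i
    exact heta _ (hmem r u hu i)
  · rw [hadom]
    rintro _ ⟨a, ha, rfl⟩
    exact hused a ha
  · obtain ⟨u, hu, rfl⟩ := Inst.mem_map_rels.mp ht
    exact (hlvl _ (hmem r u hu i)).trans (inv.lvl_le_rank r u hu i)
  · simp only [hadom]
    rcases inv.fired_done e he with ⟨x, hx, hdead, hnull⟩ | ⟨g, hg, hgh⟩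
    · refine .inl ⟨x, hx, ?_, hnull⟩
      rintro ⟨a, ha, hax⟩
      rcases hinto a ha with h | h
      · exact hdead (hax ▸ h)
      · exact hnull (hax ▸ isConst_of_mem_mv_adom h)
    · by_cases hmoved : ∃ x ∈ e.1.frontier, ρ (e.2 x) ≠ e.2 x
      · obtain ⟨x, hx, hρx⟩ := hmoved
        refine .inl ⟨x, hx, notMem_image_of_moved hidem hρx _, fun hc => hρx ?_⟩
        obtain ⟨c, hc⟩ := hc
        rw [hc, hρ]
      · push Not at hmoved
        refine .inr ⟨fun x => ρ (g x), fun x hx => (congrArg ρ (hg x hx)).trans (hmoved x hx), ?_⟩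
        exact hgh.comp (Inst.isHomVia_map hρ _)

lemma measure_collapse_lt (hidem : ∀ a, ρ (ρ a) = ρ a)
    (hinto : ∀ a ∈ s.J.adom, ρ a ∈ s.J.adom ∪ M.mv.adom) (hfin : s.J.facts.Finite)
    {a : Val} (ha : a ∈ s.J.adom) (hna : ¬ a.IsConst) (hmoved : ρ a ≠ a) :
    (s.collapse ρ).measure < s.measure := by
  refine Prod.Lex.right _ (Set.ncard_lt_ncard ?_ ((Inst.adom_finite hfin).subset fun _ h => h.1))
  have hadom : (s.collapse ρ).J.adom = ρ '' s.J.adom := Inst.adom_map ρ s.J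
  refine ⟨?_, fun hsub => notMem_image_of_moved hidem hmoved _ (hadom ▸ (hsub ⟨ha, hna⟩).1)⟩
  rintro _ ⟨hb, hnc⟩
  refine ⟨?_, hnc⟩
  rw [hadom] at hb
  obtain ⟨b, hb, rfl⟩ := hb
  exact (hinto b hb).resolve_right fun h => hnc (isConst_of_mem_mv_adom h)

end Collapse

lemma Inv.collapse_replace (inv : s.Inv I) {a b : Val} (ha : a ∈ s.J.adom) (hb : b ∈ s.J.adom)
    (hna : ¬ a.IsConst) (hab : a ≠ b) (heta : s.eta a = s.eta b) (hlvl : s.lvl b ≤ s.lvl a) :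
    (s.collapse fun x => if x = a then b else x).Inv I ∧
      (s.collapse fun x => if x = a then b else x).measure < s.measure := by
  set ρ : Val → Val := fun x => if x = a then b else x
  have hidem : ∀ x, ρ (ρ x) = ρ x := fun x => by
    by_cases hx : x = a <;> simp [ρ, hx]
  have hinto : ∀ x ∈ s.J.adom, ρ x ∈ s.J.adom ∪ M.mv.adom := fun x hx => by
    by_cases hxa : x = a
    · simp [ρ, hxa, hb]
    · simp [ρ, hxa, hx]
  refine ⟨inv.collapse (fixesConsts_replace_null (Val.not_isConst_iff.mp hna)) hidem hinto
    (fun x _ => ?_) (fun x _ => ?_),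
    measure_collapse_lt hidem hinto inv.finite ha hna (by simp [ρ, hab.symm])⟩ <;>
  · by_cases hxa : x = a
    · simp [ρ, hxa, heta, hlvl]
    · simp [ρ, hxa]

lemma Inv.exists_egdStep (inv : s.Inv I) (hvb : M.ValidBase I) {σ : EGD M.S}
    (hσ : Dep.egd σ ∈ M.deps) {h : ℕ → Val} (hb : BodyHolds h σ.body s.J)
    (hne : h σ.lhs ≠ h σ.rhs) :
    ∃ s' : GuidedState M, s'.Inv I ∧ egdStepOk σ s.J s'.J ∧ s'.measure < s.measure := by
  have hbI := hb.comp inv.hom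
  have heta : s.eta (h σ.lhs) = s.eta (h σ.rhs) := hvb.2.1 _ hσ _ hbI
  obtain ⟨hl, hr⟩ := σ.mem_bodyVars_of_holds (hvb.2.1 _ hσ) hbI fun e => hne (congrArg h e)
  have hla := hb.mem_adom hl
  have hra := hb.mem_adom hr
  have hnot_both : (h σ.lhs).IsConst → ¬ (h σ.rhs).IsConst := by
    rintro ⟨c, hc⟩ ⟨d, hd⟩
    rw [hc, hd, inv.hom.1, inv.hom.1] at heta
    exact hne (by rw [hc, hd, heta])
  have hlvl0 : ∀ a ∈ s.J.adom, a.IsConst → s.lvl a = 0 := fun a ha =>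
    inv.lvl_const a (inv.adom_subset ha)
  by_cases hcase : ¬ (h σ.lhs).IsConst ∧ s.lvl (h σ.rhs) ≤ s.lvl (h σ.lhs)
  · obtain ⟨inv', hlt⟩ := inv.collapse_replace hla hra hcase.1 hne heta hcase.2
    exact ⟨_, inv', ⟨h, hb, hne, .inl ⟨Val.not_isConst_iff.mp hcase.1, rfl⟩⟩, hlt⟩
  · have hnr : ¬ (h σ.rhs).IsConst := fun hc =>
      hnot_both (not_not.mp fun hnl => hcase ⟨hnl, by rw [hlvl0 _ hra hc]; exact Nat.zero_le _⟩) hc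
    have hlvl : s.lvl (h σ.lhs) ≤ s.lvl (h σ.rhs) := by
      by_cases hlc : (h σ.lhs).IsConst
      · rw [hlvl0 _ hla hlc]
        exact Nat.zero_le _
      · exact (Nat.lt_of_not_le fun hle => hcase ⟨hlc, hle⟩).le
    obtain ⟨inv', hlt⟩ := inv.collapse_replace hra hla hnr hne.symm heta.symm hlvl
    exact ⟨_, inv', ⟨h, hb, hne, .inr ⟨Val.not_isConst_iff.mp hnr, rfl⟩⟩, hlt⟩

noncomputable def applyOn (η : Val → Val) {k : ℕ} (vals : Fin k → Val) : Val → Val :=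
  fun a => if ∃ i, vals i = a then η a else a

lemma Inv.collapse_applyOn (inv : s.Inv I) {k : ℕ} {vals : Fin k → Val}
    (hmv : ∀ i, s.eta (vals i) ∈ M.mv.adom) :
    FixesConsts (applyOn s.eta vals) ∧ (s.collapse (applyOn s.eta vals)).Inv I ∧
      ∀ j, vals j ∈ s.J.adom → s.eta (vals j) ≠ vals j →
        (s.collapse (applyOn s.eta vals)).measure < s.measure := by
  set ρ := applyOn s.eta vals
  have hconst : ∀ i, (s.eta (vals i)).IsConst := fun i => isConst_of_mem_mv_adom (hmv i)
  have hcases : ∀ a, (∃ i, vals i = a ∧ ρ a = s.eta (vals i)) ∨ ρ a = a := by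
    intro a
    by_cases ha : ∃ i, vals i = a
    · obtain ⟨i, rfl⟩ := ha
      exact .inl ⟨i, rfl, if_pos ⟨i, rfl⟩⟩
    · exact .inr (if_neg ha)
  have hρ : FixesConsts ρ := fun c => by
    rcases hcases (.const c) with ⟨i, hi, hρi⟩ | hρi
    · rw [hρi, hi, inv.hom.1]
    · exact hρi
  have hfix : ∀ a, (∃ i, vals i = a ∧ ρ a = s.eta (vals i)) → ρ (ρ a) = ρ a := by
    rintro a ⟨i, -, hi⟩
    obtain ⟨c, hc⟩ := hconst i
    rw [hi, hc, hρ]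
  have hidem : ∀ a, ρ (ρ a) = ρ a := fun a =>
    (hcases a).elim (hfix a) fun hi => by rw [hi, hi]
  have hinto : ∀ a ∈ s.J.adom, ρ a ∈ s.J.adom ∪ M.mv.adom := fun a ha =>
    (hcases a).elim (fun ⟨i, _, hi⟩ => .inr (hi ▸ hmv i)) fun hi => .inl (by rw [hi]; exact ha)
  refine ⟨hρ, inv.collapse hρ hidem hinto (fun a _ => ?_) (fun a _ => ?_),
    fun j hja hj => measure_collapse_lt hidem hinto inv.finite hja
      (fun ⟨c, hc⟩ => hj (by rw [hc, inv.hom.1]))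
      (by rwa [show ρ (vals j) = _ from if_pos ⟨j, rfl⟩])⟩
  · rcases hcases a with ⟨i, rfl, hi⟩ | hi
    · obtain ⟨c, hc⟩ := hconst i
      rw [hi, hc, inv.hom.1]
    · rw [hi]
  · rcases hcases a with ⟨i, -, hi⟩ | hi
    · rw [hi, inv.lvl_const _ (inv.mv_adom_subset (hmv i)) (hconst i)]
      exact Nat.zero_le _
    · rw [hi]

/-- The homomorphism into `I` sends the head tuple to a tuple `t` of `MV`; the step takes
the disjunct `t`. -/
lemma Inv.exists_viewStep (inv : s.Inv I) (hvb : M.ValidBase I) {v : M.views.idx}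
    {h : ℕ → Val} (hb : BodyHolds h (M.views.defn v).body s.J)
    (hvio : ∀ t ∈ M.mv.rels v, ∃ i, headVals (M.views.defn v) h i ≠ t i) :
    ∃ s' : GuidedState M, s'.Inv I ∧ M.mvStep (some s.J) (some s'.J) ∧
      s'.measure < s.measure := by
  set vals := headVals (M.views.defn v) h
  have ht : (fun i => s.eta (vals i)) ∈ M.mv.rels v :=
    hvb.2.2 v ▸ CQ.comp_mem_answer _ inv.hom ⟨h, hb, rfl⟩
  obtain ⟨hρ, hinv, hlt⟩ := inv.collapse_applyOn fun i => M.mem_mv_adom ht i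
  obtain ⟨j, hj⟩ := hvio _ ht
  have hja : vals j ∈ s.J.adom := by
    cases hi : (M.views.defn v).head j with
    | var x =>
      obtain ⟨A, hA, k, hk⟩ := (M.views.safe v).2 x ⟨j, hi⟩
      simpa [vals, headVals, hi, Term.eval] using hb.mem_adom ⟨A, hA, k, hk⟩
    | const c => exact absurd (by simp [vals, headVals, hi, Term.eval, inv.hom.1 c]) hj
  refine ⟨_, hinv, ⟨M.gedResults v s.J h, .inr (.inr (.inr (.inr
    ⟨v, ⟨_, ht⟩, j.pos, h, hb, hvio, rfl⟩))), .inl ⟨_, ht, _, rfl, _, hρ,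
      fun a ha => if_neg fun ⟨i, hi⟩ => ha i hi.symm, fun i => if_pos ⟨i, rfl⟩, rfl⟩⟩,
    hlt j hja (Ne.symm hj)⟩

noncomputable def triggerLevel (s : GuidedState M) (σ : TGD M.S) (h : ℕ → Val) : ℕ :=
  σ.frontier_finite.toFinset.sup fun x => s.lvl (h x) + 1

noncomputable def fireTgd (s : GuidedState M) (σ : TGD M.S) (h μ : ℕ → Val) (N : ℕ) :
    GuidedState M where
  J := σ.fire s.J h N
  eta a := if a ∈ s.used then s.eta a else Val.mapNulls (fun n => μ (n - N)) a
  lvl a := if a ∈ s.used then s.lvl a else s.triggerLevel σ h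
  used := s.used ∪ σ.freshExt h N '' σ.existentials
  fired := insert (σ, σ.frontierKey h) s.fired

lemma Inv.lvl_le_rank_of_bodyHolds (inv : s.Inv I) {B : List (Atom M.S)} {h : ℕ → Val}
    (hb : BodyHolds h B s.J) {A : Atom M.S} (hA : A ∈ B) {j : Fin (M.S.arity A.rel)} {x : ℕ}
    (hj : A.args j = .var x) : s.lvl (h x) ≤ rank M.deps (A.rel, j) := by
  simpa [hj, Term.eval] using inv.lvl_le_rank _ _ (hb A hA) j

section FireTgd

variable {σ : TGD M.S} {h μ : ℕ → Val} {N : ℕ}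

lemma freshExt_notMem_used (hN : ∀ n, N ≤ n → Val.null n ∉ s.used) {x : ℕ}
    (hx : x ∉ BodyVars σ.body) : σ.freshExt h N x ∉ s.used := by
  rw [σ.freshExt_of_notMem hx]
  exact hN _ (Nat.le_add_right _ _)

lemma triggerLevel_le (inv : s.Inv I) (hb : BodyHolds h σ.body s.J) {n : ℕ}
    (hn : ∀ A ∈ σ.body, ∀ j x, A.args j = .var x → x ∈ σ.frontier →
      rank M.deps (A.rel, j) < n) : s.triggerLevel σ h ≤ n :=
  Finset.sup_le fun x hx => by
    obtain ⟨⟨A, hA, j, hj⟩, hxh⟩ := σ.frontier_finite.mem_toFinset.mp hx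
    exact (inv.lvl_le_rank_of_bodyHolds hb hA hj).trans_lt (hn A hA j x hj ⟨⟨A, hA, j, hj⟩, hxh⟩)

lemma fireTgd_eta_of_mem {a : Val} (ha : a ∈ s.used) : (s.fireTgd σ h μ N).eta a = s.eta a :=
  if_pos ha

lemma fireTgd_lvl_of_mem {a : Val} (ha : a ∈ s.used) : (s.fireTgd σ h μ N).lvl a = s.lvl a :=
  if_pos ha

lemma Inv.isHomVia_fireTgd (inv : s.Inv I) (hb : BodyHolds h σ.body s.J)
    (hμ : ∀ x ∈ BodyVars σ.body, μ x = s.eta (h x)) (hμh : BodyHolds μ σ.head I)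
    (hN : ∀ n, N ≤ n → Val.null n ∉ s.used) :
    IsHomVia (s.fireTgd σ h μ N).eta (s.fireTgd σ h μ N).J I := by
  have hfixes : FixesConsts (s.fireTgd σ h μ N).eta := fun c => by
    by_cases hc : Val.const c ∈ s.used
    · exact (fireTgd_eta_of_mem hc).trans (inv.hom.1 c)
    · exact if_neg hc
  have hfresh : ∀ y ∈ BodyVars σ.head, (s.fireTgd σ h μ N).eta (σ.freshExt h N y) = μ y := by
    intro y _
    by_cases hyb : y ∈ BodyVars σ.body
    · rw [σ.freshExt_of_mem hyb, fireTgd_eta_of_mem (inv.adom_subset (hb.mem_adom hyb)), hμ y hyb]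
    · rw [show (s.fireTgd σ h μ N).eta (σ.freshExt h N y) = _ from
        if_neg (freshExt_notMem_used hN hyb), σ.freshExt_of_notMem hyb]
      simp [Val.mapNulls]
  refine ⟨hfixes, fun r t ht => ?_⟩
  rcases ht with ht | ⟨A, hA, heq⟩
  · convert inv.hom.2 r t ht using 2 with i
    exact fireTgd_eta_of_mem (inv.adom_subset (Inst.mem_adom.mpr ⟨r, t, ht, i, rfl⟩))
  · cases heq
    convert hμh.congr (fun y hy => (hfresh y hy).symm) A hA using 2 with i
    exact (hfixes.eval_comp _ _).symm

/-- A copied body value moves along a regular edge; a new null sits at the end of special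
edges from every frontier position. -/
lemma Inv.lvl_fireTgd_le_rank (inv : s.Inv I) (hwa : WeaklyAcyclic M.deps)
    (hσ : Dep.tgd σ ∈ M.deps) (hb : BodyHolds h σ.body s.J)
    (hN : ∀ n, N ≤ n → Val.null n ∉ s.used) (r : M.S.rel)
    (t : Fin (M.S.arity r) → Val) (ht : t ∈ (s.fireTgd σ h μ N).J.rels r) (i : Fin (M.S.arity r)) :
    (s.fireTgd σ h μ N).lvl (t i) ≤ rank M.deps (r, i) := by
  rcases ht with ht | ⟨A, hA, heq⟩
  · exact (fireTgd_lvl_of_mem (inv.adom_subset (Inst.mem_adom.mpr ⟨r, t, ht, i, rfl⟩))).trans_le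
      (inv.lvl_le_rank r t ht i)
  cases heq
  obtain ⟨y, hy⟩ := (M.depsConstantFree _ hσ).2 A hA i
  show (s.fireTgd σ h μ N).lvl ((A.args i).eval (σ.freshExt h N)) ≤ _
  rw [hy]
  show (s.fireTgd σ h μ N).lvl (σ.freshExt h N y) ≤ _
  by_cases hyb : y ∈ BodyVars σ.body
  · rw [σ.freshExt_of_mem hyb, fireTgd_lvl_of_mem (inv.adom_subset (hb.mem_adom hyb))]
    obtain ⟨B, hB, k, hk⟩ := hyb
    exact (inv.lvl_le_rank_of_bodyHolds hb hB hk).trans (rank_le_of_depEdge M.depsFinite hwa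
      ⟨σ, hσ, .inl ⟨y, ⟨B, hB, rfl, k, rfl, hk⟩, ⟨A, hA, i, hy⟩, ⟨A, hA, rfl, i, rfl, hy⟩⟩⟩)
  · rw [show (s.fireTgd σ h μ N).lvl (σ.freshExt h N y) = _ from
      if_neg (freshExt_notMem_used hN hyb)]
    exact triggerLevel_le inv hb fun B hB k x hk hx => rank_lt_of_specialEdge M.depsFinite hwa hσ
      ⟨x, y, ⟨B, hB, rfl, k, rfl, hk⟩, hx.2, ⟨A, hA, i, hy⟩, hyb, ⟨A, hA, rfl, i, rfl, hy⟩⟩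

lemma Inv.fireTgd (inv : s.Inv I) (hwa : WeaklyAcyclic M.deps) (hσ : Dep.tgd σ ∈ M.deps)
    (hb : BodyHolds h σ.body s.J) (hμ : ∀ x ∈ BodyVars σ.body, μ x = s.eta (h x))
    (hμh : BodyHolds μ σ.head I) (hN : ∀ n, N ≤ n → Val.null n ∉ s.used) :
    (s.fireTgd σ h μ N).Inv I := by
  have hadom := σ.adom_fire_subset (M.depsConstantFree _ hσ).2 hb N
  refine ⟨inv.finite.union (factSet_finite _ _), inv.isHomVia_fireTgd hb hμ hμh hN,
    inv.used_finite.union (((bodyVars_finite _).sdiff).image _),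
    hadom.trans (Set.union_subset_union_left _ inv.adom_subset),
    inv.mv_adom_subset.trans Set.subset_union_left, ?_, inv.lvl_fireTgd_le_rank hwa hσ hb hN,
    ?_, ?_⟩
  · rintro a (ha | ⟨x, hx, rfl⟩) hc
    · exact (fireTgd_lvl_of_mem ha).trans (inv.lvl_const a ha hc)
    · exact absurd hc (Val.not_isConst_iff.mpr ⟨_, σ.freshExt_of_notMem hx.2⟩)
  · rintro e (rfl | he) x hx
    · refine .inl ?_
      show σ.frontierKey h x ∈ s.used
      rw [TGD.frontierKey, if_pos hx]
      exact inv.adom_subset (hb.mem_adom hx.1)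
    · exact .inl (inv.fired_used e he x hx)
  · rintro e (rfl | he)
    · exact .inr ⟨σ.freshExt h N, fun x hx => (if_pos hx.1).trans (if_pos hx).symm,
        fun A hA => .inr ⟨A, hA, rfl⟩⟩
    · rcases inv.fired_done e he with ⟨x, hx, hdead, hnc⟩ | ⟨g, hg, hgh⟩
      · refine .inl ⟨x, hx, fun hx' => ?_, hnc⟩
        rcases hadom hx' with h1 | ⟨y, hy, hyx⟩
        · exact hdead h1
        · exact freshExt_notMem_used hN hy.2 (hyx ▸ inv.fired_used e he x hx)
      · exact .inr ⟨g, hg, hgh.mono Set.subset_union_left⟩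

lemma frontierKey_mem_candidates_iff (hσ : Dep.tgd σ ∈ M.deps) (hu : ∀ x ∈ σ.frontier, h x ∈ s.used)
    (r : ℕ) : (σ, σ.frontierKey h) ∈ s.candidates r ↔ s.triggerLevel σ h ≤ r := by
  have hkey : ∀ x ∈ σ.frontier, σ.frontierKey h x = h x := fun x hx => if_pos hx
  simp only [candidates, Set.mem_ofPred_eq, triggerLevel, Finset.sup_le_iff,
    Set.Finite.mem_toFinset, Nat.add_one_le_iff]
  refine ⟨fun ⟨_, _, hr⟩ x hx => hkey x hx ▸ (hr x hx).2, fun hr => ⟨hσ, fun x hx => if_neg hx,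
    fun x hx => ⟨hkey x hx ▸ hu x hx, hkey x hx ▸ hr x hx⟩⟩⟩

lemma Inv.frontierKey_notMem_fired (inv : s.Inv I) (hb : BodyHolds h σ.body s.J)
    (hns : ¬ ∃ g : ℕ → Val, (∀ x ∈ BodyVars σ.body, g x = h x) ∧ BodyHolds g σ.head s.J) :
    (σ, σ.frontierKey h) ∉ s.fired := by
  have hkey : ∀ x ∈ σ.frontier, σ.frontierKey h x = h x := fun x hx => if_pos hx
  intro hf
  rcases inv.fired_done _ hf with ⟨x, hx, hdead, -⟩ | ⟨g, hg, hgh⟩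
  · exact hdead (by rw [show (σ, σ.frontierKey h).2 x = h x from hkey x hx]; exact hb.mem_adom hx.1)
  · refine hns ⟨fun x => if x ∈ BodyVars σ.body then h x else g x, fun x hx => if_pos hx,
      hgh.congr fun x hx => ?_⟩
    split_ifs with hxb
    · exact (hg x ⟨hxb, hx⟩).trans (hkey x ⟨hxb, hx⟩)
    · rfl

lemma candidates_fireTgd (hN : ∀ n, N ≤ n → Val.null n ∉ s.used) {r : ℕ}
    (hr : r ≤ s.triggerLevel σ h) : (s.fireTgd σ h μ N).candidates r = s.candidates r := by
  ext e
  refine and_congr_right fun _ => and_congr_right fun _ => forall₂_congr fun x _ => ?_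
  constructor
  · rintro ⟨hu | ⟨y, hy, hyf⟩, hlt⟩
    · exact ⟨hu, (fireTgd_lvl_of_mem hu).symm.trans_lt hlt⟩
    · rw [show (s.fireTgd σ h μ N).lvl (e.2 x) = s.triggerLevel σ h from
        if_neg fun hu => freshExt_notMem_used hN hy.2 (hyf ▸ hu)] at hlt
      omega
  · rintro ⟨hu, hlt⟩
    exact ⟨.inl hu, (fireTgd_lvl_of_mem hu).trans_lt hlt⟩

lemma measure_fireTgd_lt (inv : s.Inv I) (hwa : WeaklyAcyclic M.deps)
    (hσ : Dep.tgd σ ∈ M.deps) (hb : BodyHolds h σ.body s.J)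
    (hns : ¬ ∃ g : ℕ → Val, (∀ x ∈ BodyVars σ.body, g x = h x) ∧ BodyHolds g σ.head s.J)
    (hN : ∀ n, N ≤ n → Val.null n ∉ s.used) : (s.fireTgd σ h μ N).measure < s.measure := by
  set L := s.triggerLevel σ h
  have hkey := frontierKey_mem_candidates_iff (s := s) hσ fun x hx =>
    inv.adom_subset (hb.mem_adom hx.1)
  have hL : L < (specialEdges M.deps).ncard + 2 :=
    Nat.lt_succ_of_le (triggerLevel_le inv hb fun A _ j _ _ _ =>
      Nat.lt_succ_of_le (rank_le_ncard_specialEdges M.depsFinite hwa (A.rel, j)))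
  refine Prod.Lex.left _ _ ⟨⟨L, hL⟩, fun j (hj : (j : ℕ) < L) => ?_, ?_⟩
  · show (_ \ insert _ s.fired).ncard = _
    rw [candidates_fireTgd hN hj.le, Set.sdiff_insert_of_notMem fun h =>
      absurd ((hkey j).mp h) (not_le.mpr hj)]
    rfl
  · show (_ \ insert _ s.fired).ncard < _
    rw [candidates_fireTgd hN le_rfl]
    exact Set.ncard_lt_ncard ⟨fun e he => ⟨he.1, fun hf => he.2 (.inr hf)⟩,
      fun hsub => (hsub ⟨(hkey L).mpr le_rfl, inv.frontierKey_notMem_fired hb hns⟩).2 (.inl rfl)⟩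
      (candidates_finite inv L).sdiff

end FireTgd

lemma Inv.exists_tgdStep (inv : s.Inv I) (hwa : WeaklyAcyclic M.deps) (hvb : M.ValidBase I)
    {σ : TGD M.S} (hσ : Dep.tgd σ ∈ M.deps) {h : ℕ → Val} (hb : BodyHolds h σ.body s.J)
    (hns : ¬ ∃ g : ℕ → Val, (∀ x ∈ BodyVars σ.body, g x = h x) ∧ BodyHolds g σ.head s.J) :
    ∃ s' : GuidedState M, s'.Inv I ∧ tgdStep σ s.J s'.J ∧ s'.measure < s.measure := by
  obtain ⟨N, hN⟩ := exists_fresh_null inv.used_finite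
  obtain ⟨μ, hμ, hμh⟩ := (hvb.2.1 _ hσ : σ.holds I) _ (hb.comp inv.hom)
  exact ⟨_, inv.fireTgd hwa hσ hb hμ hμh hN,
    σ.tgdStep_fire hb hns fun n hn ha => hN n hn (inv.adom_subset ha),
    measure_fireTgd_lt inv hwa hσ hb hns hN⟩

lemma Inv.satisfiesAll_or_exists_depStep (inv : s.Inv I) (hwa : WeaklyAcyclic M.deps)
    (hvb : M.ValidBase I) : s.J.satisfiesAll M.deps ∨
      ∃ s' : GuidedState M, s'.Inv I ∧ depStepTo M.deps s.J s'.J ∧ s'.measure < s.measure := by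
  by_cases hsat : s.J.satisfiesAll M.deps
  · exact .inl hsat
  obtain ⟨d, hd, hnd⟩ : ∃ d ∈ M.deps, ¬ d.holds s.J := by
    simpa [Inst.satisfiesAll] using hsat
  refine .inr ?_
  cases d with
  | tgd σ =>
    obtain ⟨h, hb, hns⟩ : ∃ h, BodyHolds h σ.body s.J ∧ ¬ ∃ g : ℕ → Val,
        (∀ x ∈ BodyVars σ.body, g x = h x) ∧ BodyHolds g σ.head s.J := by
      simpa [Dep.holds, TGD.holds] using hnd
    obtain ⟨s', inv', hs, hlt⟩ := inv.exists_tgdStep hwa hvb hd hb hns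
    exact ⟨s', inv', .inl ⟨σ, hd, hs⟩, hlt⟩
  | egd σ =>
    obtain ⟨h, hb, hne⟩ : ∃ h, BodyHolds h σ.body s.J ∧ h σ.lhs ≠ h σ.rhs := by
      simpa [Dep.holds, EGD.holds] using hnd
    obtain ⟨s', inv', hs, hlt⟩ := inv.exists_egdStep hvb hd hb hne
    exact ⟨s', inv', .inr ⟨σ, hd, hs⟩, hlt⟩

lemma Inv.leaf_or_exists_mvStep (inv : s.Inv I) (hwa : WeaklyAcyclic M.deps)
    (hvb : M.ValidBase I) : M.mvChaseSteps (some s.J) = ∅ ∨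
      ∃ s' : GuidedState M, s'.Inv I ∧ M.mvStep (some s.J) (some s'.J) ∧
        s'.measure < s.measure := by
  rcases inv.satisfiesAll_or_exists_depStep hwa hvb with hsat | ⟨s', inv', hs, hlt⟩
  swap
  · exact .inr ⟨s', inv', mvStep_of_depStepTo hs, hlt⟩
  by_cases hview : ∃ v h, BodyHolds h (M.views.defn v).body s.J ∧
      ∀ t ∈ M.mv.rels v, ∃ i, headVals (M.views.defn v) h i ≠ t i
  · obtain ⟨v, h, hb, hvio⟩ := hview
    exact .inr (inv.exists_viewStep hvb hb hvio)
  refine .inl (Set.eq_empty_of_forall_notMem fun C hC => ?_)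
  rcases hC with ⟨σ, hσ, -, ⟨h, hb, hns, -⟩, -⟩ | ⟨σ, hσ, -, ⟨h, hb, hne, -⟩, -⟩ |
    ⟨σ, hσ, ⟨h, hb, hne, -⟩, -⟩ | ⟨v, hv, ⟨h, hb⟩, -⟩ | ⟨v, -, -, h, hb, hvio, -⟩
  · obtain ⟨g, hg, hgh⟩ := hsat _ hσ h hb
    exact hns ⟨g, hg, hgh⟩
  · exact hne (hsat _ hσ h hb)
  · exact hne (hsat _ hσ h hb)
  · have hmem := hvb.2.2 v ▸ CQ.comp_mem_answer _ inv.hom ⟨h, hb, rfl⟩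
    rw [hv] at hmem
    exact hmem
  · exact hview ⟨v, h, hb, hvio⟩

def initial (J0 : Inst M.S) (η : Val → Val) : GuidedState M :=
  ⟨J0, η, fun _ => 0, J0.adom ∪ M.mv.adom, ∅⟩

lemma inv_initial {J0 : Inst M.S} {η : Val → Val} (hpre : M.IsPreSolution J0)
    (hη : IsHomVia η J0 I) : (initial J0 η).Inv I := by
  have hfin := (finite_and_mv_subset_answer_of_preSolution hpre).1
  exact ⟨hfin, hη, (Inst.adom_finite hfin).union (Inst.adom_finite M.mvFinite),
    Set.subset_union_left, Set.subset_union_right, fun _ _ _ => rfl,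
    fun _ _ _ _ => Nat.zero_le _, fun _ he => he.elim, fun _ he => he.elim⟩

end GuidedState

open GuidedState in
theorem isVVSolution_nonempty_of_valid (hwa : WeaklyAcyclic M.deps) (hval : M.Valid) :
    {J | M.IsVVSolution J}.Nonempty := by
  obtain ⟨I, hvb⟩ := hval
  obtain ⟨J0, η, hpre, hη⟩ := exists_preSolution_isHomVia hvb
  obtain ⟨s1, inv1, hchase, hsat⟩ := exists_reflTransGen_of_descent measure
    (fun _ inv => inv.satisfiesAll_or_exists_depStep hwa hvb) _ (inv_initial hpre hη)
  obtain ⟨s2, -, hreach, hleaf⟩ := exists_reflTransGen_of_descent measure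
    (fun _ inv => inv.leaf_or_exists_mvStep hwa hvb) s1 inv1
  exact ⟨s2.J, s1.J, ⟨J0, hpre, hchase.lift GuidedState.J fun _ _ h => h, hsat⟩,
    hreach.lift (fun s : GuidedState M => some s.J) fun _ _ h => h, hleaf⟩

end MVSetting

theorem valid_iff_vv_nonempty (M : MVSetting) (hwa : WeaklyAcyclic M.deps) :
    M.Valid ↔ { J | M.IsVVSolution J }.Nonempty :=
  ⟨M.isVVSolution_nonempty_of_valid hwa, fun ⟨_, hJ⟩ => M.valid_of_isVVSolution hJ⟩

end CertainViews
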